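/- arXiv:2402.00202 — 8 statements merged into one kernel-verified Lean document; each statement's English description precedes it below -/
import Mathlib

section
/- Under the strong central condition with learning rate ω̄, for any fixed learning rate ω ∈ [0, ω̄), the process E_n = G_{n,on}(θ*) given by the online GUe-value evaluated at the risk minimizer θ* is a nonnegative supermartingale with respect to the natural filtration of (Z_i), satisfies E[E_1] ≤ 1, and is an e-process: for every stopping time τ (almost surely finite) with respect to this filtration, E[E_τ] ≤ 1. -/
set_option maxHeartbeats 1000000


open MeasureTheory ProbabilityTheory Filter

noncomputable section

/-- The filtration `ℱ n = σ(Z_i : i < n)` generated by the data sequence. -/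
def natFiltration {Ω 𝕫 : Type*} [m : MeasurableSpace Ω] [MeasurableSpace 𝕫]
    (Z : ℕ → Ω → 𝕫) (hZ : ∀ i, Measurable (Z i)) : Filtration ℕ m where
  seq n := ⨆ i ∈ Set.Iio n, MeasurableSpace.comap (Z i) inferInstance
  mono' a b hab := biSup_mono fun i hi => lt_of_lt_of_le hi hab
  le' n := iSup₂_le fun i _ => (hZ i).comap_le

/-- The online generalized universal e-value `G_{n,on}(θ)`, built from the data `Z_1, …, Z_n`
(0-indexed as `Z 0, …, Z (n-1)`) and the lagged estimators `θ̂_0, …, θ̂_{n-1}`. -/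
def GUeOn {Ω 𝕫 Θ : Type*} (ℓ : Θ → 𝕫 → ℝ) (ω : ℝ) (Z : ℕ → Ω → 𝕫)
    (θhat : ℕ → Ω → Θ) (θ : Θ) (n : ℕ) (x : Ω) : ℝ :=
  Real.exp (-ω * ∑ i ∈ Finset.range n, (ℓ (θhat i x) (Z i x) - ℓ θ (Z i x)))

/-- Auxiliary "one-step" bound: if `G` and `ϑ` are measurable w.r.t. a sub-σ-algebra `m'`
which is independent of `W`, and `∫⁻ f θ dμ_W ≤ 1` for each fixed `θ`, then
`∫⁻ G·f(ϑ, W) ≤ ∫⁻ G`. -/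
lemma key_lintegral {Ω 𝕫 Θ : Type*} (m' : MeasurableSpace Ω) [m : MeasurableSpace Ω]
    [MeasurableSpace 𝕫] [MeasurableSpace Θ]
    (μ : Measure Ω) [IsProbabilityMeasure μ] (hm' : m' ≤ m)
    {G : Ω → ENNReal} (hG : Measurable[m'] G)
    {ϑ : Ω → Θ} (hϑ : Measurable[m'] ϑ)
    {W : Ω → 𝕫} (hW : Measurable W)
    (hInd : Indep m' (MeasurableSpace.comap W inferInstance) μ)
    {f : Θ → 𝕫 → ENNReal} (hf : Measurable (Function.uncurry f))
    (hf1 : ∀ θ, ∫⁻ z, f θ z ∂(μ.map W) ≤ 1) :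
    ∫⁻ x, G x * f (ϑ x) (W x) ∂μ ≤ ∫⁻ x, G x ∂μ := by
  set V : Ω → ENNReal × Θ := fun x => (G x, ϑ x) with hV
  have hVmeas' : Measurable[m'] V := hG.prodMk hϑ
  have hVmeas : Measurable V := hVmeas'.mono hm' le_rfl
  have hIndVW : IndepFun V W μ := by
    rw [IndepFun_iff_Indep]
    exact indep_of_indep_of_le_left hInd hVmeas'.comap_le
  have hmap : μ.map (fun x => (V x, W x)) = (μ.map V).prod (μ.map W) :=
    (indepFun_iff_map_prod_eq_prod_map_map hVmeas.aemeasurable hW.aemeasurable).mp hIndVW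
  have hFmeas : Measurable (fun p : (ENNReal × Θ) × 𝕫 => p.1.1 * f p.1.2 p.2) :=
    (measurable_fst.comp measurable_fst).mul
      (hf.comp ((measurable_snd.comp measurable_fst).prodMk measurable_snd))
  calc ∫⁻ x, G x * f (ϑ x) (W x) ∂μ
      = ∫⁻ p, p.1.1 * f p.1.2 p.2 ∂(μ.map (fun x => (V x, W x))) := by
        rw [lintegral_map hFmeas (hVmeas.prodMk hW)]
    _ = ∫⁻ v, ∫⁻ z, v.1 * f v.2 z ∂(μ.map W) ∂(μ.map V) := by
        rw [hmap, lintegral_prod _ hFmeas.aemeasurable]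
    _ ≤ ∫⁻ v, v.1 ∂(μ.map V) := by
        refine lintegral_mono fun v => ?_
        rw [lintegral_const_mul _ (show Measurable fun z => f v.2 z from
          hf.comp measurable_prodMk_left)]
        calc v.1 * ∫⁻ z, f v.2 z ∂(μ.map W) ≤ v.1 * 1 := mul_le_mul_right (hf1 v.2) _
          _ = v.1 := mul_one _
    _ = ∫⁻ x, G x ∂μ := lintegral_map measurable_fst hVmeas

/-- Under the strong central condition with learning rate `ω̄`, for any fixed `ω ∈ [0, ω̄)`,
the online GUe-value process at the risk minimizer `θ*` is a nonnegative supermartingale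
w.r.t. the natural filtration of `(Z_i)`, satisfies `E[E_1] ≤ 1`, and is an e-process:
`E[E_τ] ≤ 1` for every stopping time `τ`. -/
theorem online_GUe_is_eprocess
    {Ω 𝕫 Θ : Type*} [MeasurableSpace Ω] [MeasurableSpace 𝕫] [MeasurableSpace Θ]
    (μ : Measure Ω) [IsProbabilityMeasure μ]
    (D : Measure 𝕫) [IsProbabilityMeasure D]
    (ℓ : Θ → 𝕫 → ℝ) (hℓnn : ∀ θ z, 0 ≤ ℓ θ z)
    (hℓmeas : Measurable (Function.uncurry ℓ))
    (Z : ℕ → Ω → 𝕫) (hZmeas : ∀ i, Measurable (Z i))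
    (hindep : iIndepFun Z μ)
    (hiid : ∀ i, μ.map (Z i) = D)
    (θstar : Θ)
    (hmin : ∀ θ : Θ, ∫⁻ z, ENNReal.ofReal (ℓ θstar z) ∂D ≤ ∫⁻ z, ENNReal.ofReal (ℓ θ z) ∂D)
    (θhat : ℕ → Ω → Θ) (θ0 : Θ) (hθ0 : θhat 0 = fun _ => θ0)
    (hθhat : ∀ k, Measurable[natFiltration Z hZmeas k] (θhat k))
    (ωbar : ℝ) (hωbar : 0 < ωbar)
    (hSCC : ∀ θ : Θ, ∀ ω' ∈ Set.Ico (0 : ℝ) ωbar,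
      ∫⁻ z, ENNReal.ofReal (Real.exp (-ω' * (ℓ θ z - ℓ θstar z))) ∂D ≤ 1)
    (ω : ℝ) (hω : ω ∈ Set.Ico (0 : ℝ) ωbar) :
    Supermartingale (GUeOn ℓ ω Z θhat θstar) (natFiltration Z hZmeas) μ ∧
    (∀ n x, 0 ≤ GUeOn ℓ ω Z θhat θstar n x) ∧
    (∫⁻ x, ENNReal.ofReal (GUeOn ℓ ω Z θhat θstar 1 x) ∂μ ≤ 1) ∧
    (∀ τ : Ω → ℕ, IsStoppingTime (natFiltration Z hZmeas) (fun x => (τ x : WithTop ℕ)) →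
      ∫⁻ x, ENNReal.ofReal (GUeOn ℓ ω Z θhat θstar (τ x) x) ∂μ ≤ 1) := by
  set ℱ := natFiltration Z hZmeas with hℱ
  set X := GUeOn ℓ ω Z θhat θstar with hX
  have hXpos : ∀ n x, 0 < X n x := fun n x => Real.exp_pos _
  have hX0 : X 0 = fun _ => (1 : ℝ) := by
    funext x; simp [hX, GUeOn]
  -- measurability of `Z i` w.r.t. `ℱ n` for `i < n`
  have hcomap_le : ∀ i n, i < n →
      MeasurableSpace.comap (Z i) inferInstance ≤ ℱ n := by
    intro i n hi
    exact le_biSup (fun i => MeasurableSpace.comap (Z i) inferInstance) (Set.mem_Iio.mpr hi)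
  have hZF : ∀ i n, i < n → Measurable[ℱ n] (Z i) := fun i n hi =>
    measurable_iff_comap_le.mpr (hcomap_le i n hi)
  -- measurability of `X n` w.r.t. `ℱ n`
  have hXmeas : ∀ n, Measurable[ℱ n] (X n) := by
    intro n
    have hsum : Measurable[ℱ n] fun x =>
        ∑ i ∈ Finset.range n, (ℓ (θhat i x) (Z i x) - ℓ θstar (Z i x)) := by
      refine Finset.measurable_sum _ fun i hi => ?_
      have hi' : i < n := Finset.mem_range.mp hi
      have hθ : Measurable[ℱ n] (θhat i) := (hθhat i).mono (ℱ.mono hi'.le) le_rfl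
      have h1 : Measurable[ℱ n] fun x => ℓ (θhat i x) (Z i x) :=
        hℓmeas.comp (hθ.prodMk (hZF i n hi'))
      have h2 : Measurable[ℱ n] fun x => ℓ θstar (Z i x) :=
        hℓmeas.comp (measurable_const.prodMk (hZF i n hi'))
      exact h1.sub h2
    exact Real.measurable_exp.comp (hsum.const_mul (-ω))
  have hXmeas' : ∀ n, Measurable (X n) := fun n => (hXmeas n).mono (ℱ.le n) le_rfl
  -- the one-step factor
  set F : ℕ → Ω → ENNReal := fun n x =>
    ENNReal.ofReal (Real.exp (-ω * (ℓ (θhat n x) (Z n x) - ℓ θstar (Z n x)))) with hF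
  have hsplit : ∀ n x,
      ENNReal.ofReal (X (n + 1) x) = ENNReal.ofReal (X n x) * F n x := by
    intro n x
    simp only [hX, hF, GUeOn, Finset.sum_range_succ, mul_add, Real.exp_add]
    rw [ENNReal.ofReal_mul (Real.exp_nonneg _)]
  -- independence of `ℱ n` and `Z n`
  have hIndep_n : ∀ n, Indep (ℱ n) (MeasurableSpace.comap (Z n) inferInstance) μ := by
    intro n
    have h := hindep.iIndep
    have hdisj : Disjoint (Set.Iio n) ({n} : Set ℕ) :=
      Set.disjoint_singleton_right.mpr (lt_irrefl n)
    have h2 := indep_iSup_of_disjoint (fun i => (hZmeas i).comap_le) h hdisj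
    have h3 : (⨆ i ∈ ({n} : Set ℕ), MeasurableSpace.comap (Z i) inferInstance) =
        MeasurableSpace.comap (Z n) inferInstance := by simp
    rw [h3] at h2
    exact h2
  -- master inequality
  have master : ∀ n (G : Ω → ENNReal), Measurable[ℱ n] G →
      ∫⁻ x, G x * F n x ∂μ ≤ ∫⁻ x, G x ∂μ := by
    intro n G hG
    have hfmeas : Measurable (Function.uncurry fun θ z =>
        ENNReal.ofReal (Real.exp (-ω * (ℓ θ z - ℓ θstar z)))) := by
      have h1 : Measurable fun p : Θ × 𝕫 => ℓ p.1 p.2 := hℓmeas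
      have h2 : Measurable fun p : Θ × 𝕫 => ℓ θstar p.2 :=
        hℓmeas.comp (measurable_const.prodMk measurable_snd)
      exact ENNReal.measurable_ofReal.comp
        (Real.measurable_exp.comp ((h1.sub h2).const_mul (-ω)))
    refine key_lintegral (ℱ n) μ (ℱ.le n) hG (hθhat n) (hZmeas n) (hIndep_n n) hfmeas ?_
    intro θ
    rw [hiid n]
    exact hSCC θ ω hω
  -- lintegral bound by induction
  have hL : ∀ n, ∫⁻ x, ENNReal.ofReal (X n x) ∂μ ≤ 1 := by
    intro n
    induction n with
    | zero => simp [hX0]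
    | succ n ih =>
        calc ∫⁻ x, ENNReal.ofReal (X (n + 1) x) ∂μ
            = ∫⁻ x, ENNReal.ofReal (X n x) * F n x ∂μ := by
              simp only [hsplit]
          _ ≤ ∫⁻ x, ENNReal.ofReal (X n x) ∂μ :=
              master n _ (ENNReal.measurable_ofReal.comp (hXmeas n))
          _ ≤ 1 := ih
  -- integrability
  have hint : ∀ n, Integrable (X n) μ := by
    intro n
    refine ⟨(hXmeas' n).aestronglyMeasurable, ?_⟩
    rw [hasFiniteIntegral_iff_ofReal (ae_of_all _ fun x => (hXpos n x).le)]
    exact lt_of_le_of_lt (hL n) ENNReal.one_lt_top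
  -- set lintegral inequality
  have hsetle : ∀ n (s : Set Ω), MeasurableSet[ℱ n] s →
      ∫⁻ x in s, ENNReal.ofReal (X (n + 1) x) ∂μ ≤
        ∫⁻ x in s, ENNReal.ofReal (X n x) ∂μ := by
    intro n s hs
    have hs' : MeasurableSet s := ℱ.le n s hs
    rw [← lintegral_indicator hs', ← lintegral_indicator hs']
    have heq : ∀ x, s.indicator (fun x => ENNReal.ofReal (X (n + 1) x)) x =
        s.indicator (fun x => ENNReal.ofReal (X n x)) x * F n x := by
      intro x
      by_cases hx : x ∈ s
      · simp [hx, hsplit]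
      · simp [hx]
    calc ∫⁻ x, s.indicator (fun x => ENNReal.ofReal (X (n + 1) x)) x ∂μ
        = ∫⁻ x, s.indicator (fun x => ENNReal.ofReal (X n x)) x * F n x ∂μ := by
          simp only [heq]
      _ ≤ ∫⁻ x, s.indicator (fun x => ENNReal.ofReal (X n x)) x ∂μ :=
          master n _ ((ENNReal.measurable_ofReal.comp (hXmeas n)).indicator hs)
  -- real set integral inequality
  have hsetInt : ∀ n (s : Set Ω), MeasurableSet[ℱ n] s →
      ∫ x in s, X (n + 1) x ∂μ ≤ ∫ x in s, X n x ∂μ := by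
    intro n s hs
    have hs' : MeasurableSet s := ℱ.le n s hs
    rw [integral_eq_lintegral_of_nonneg_ae (ae_of_all _ fun x => (hXpos (n + 1) x).le)
        ((hXmeas' (n + 1)).aestronglyMeasurable.restrict),
      integral_eq_lintegral_of_nonneg_ae (ae_of_all _ fun x => (hXpos n x).le)
        ((hXmeas' n).aestronglyMeasurable.restrict)]
    refine ENNReal.toReal_mono ?_ (hsetle n s hs)
    exact ne_top_of_le_ne_top (ne_top_of_le_ne_top ENNReal.one_ne_top (hL n))
      (setLIntegral_le_lintegral _ _)
  have hadp : StronglyAdapted ℱ X := fun n => (hXmeas n).stronglyMeasurable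
  have hsuper : Supermartingale X ℱ μ :=
    supermartingale_of_setIntegral_succ_le hadp hint hsetInt
  refine ⟨hsuper, fun n x => (hXpos n x).le, hL 1, ?_⟩
  -- the e-process property
  intro τ hτ
  have hτmeas : Measurable τ := by
    refine measurable_to_countable' fun i => ?_
    have := ℱ.le i _ (hτ.measurableSet_eq_of_countable i)
    simpa [Set.preimage, WithTop.coe_eq_coe] using this
  -- stopped values at bounded stopping times
  have hstop : ∀ n : ℕ,
      ∫⁻ x, ENNReal.ofReal (X (min (τ x) n) x) ∂μ ≤ 1 := by
    intro n
    set σ : Ω → ℕ := fun x => min (τ x) n with hσdef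
    set σ' : Ω → WithTop ℕ := fun x => ((σ x : ℕ) : WithTop ℕ) with hσ'def
    have hσ : IsStoppingTime ℱ σ' := by
      have : σ' = fun x => min ((τ x : WithTop ℕ)) n := funext fun x => WithTop.coe_min _ _
      rw [this]; exact hτ.min_const n
    have hbdd : ∀ x, σ' x ≤ n := fun x => WithTop.coe_le_coe.mpr (min_le_right _ _)
    have hsub : Submartingale (-X) ℱ μ := hsuper.neg
    have h0 : IsStoppingTime ℱ (fun _ => ((0 : ℕ) : WithTop ℕ)) := isStoppingTime_const _ 0
    have hE := hsub.expected_stoppedValue_mono h0 hσ (fun x => WithTop.coe_le_coe.mpr (Nat.zero_le _)) hbdd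
    change ∫ x, (-X) 0 x ∂μ ≤ _ at hE
    have hIσ : Integrable (stoppedValue X σ') μ :=
      integrable_stoppedValue ℕ hσ hint hbdd
    have hEσ : ∫ x, stoppedValue X σ' x ∂μ ≤ 1 := by
      have h1 : ∫ x, (-X) 0 x ∂μ = -1 := by
        simp [hX0]
      have h2 : stoppedValue (-X) σ' = fun x => -(stoppedValue X σ' x) := by
        funext x; simp [stoppedValue]
      rw [h1, h2, integral_neg] at hE
      linarith
    calc ∫⁻ x, ENNReal.ofReal (X (min (τ x) n) x) ∂μ
        = ENNReal.ofReal (∫ x, stoppedValue X σ' x ∂μ) :=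
          (ofReal_integral_eq_lintegral_ofReal hIσ
            (ae_of_all _ fun x => (hXpos _ x).le)).symm
      _ ≤ ENNReal.ofReal 1 := ENNReal.ofReal_le_ofReal hEσ
      _ = 1 := ENNReal.ofReal_one
  -- measurability of truncated stopped values
  have hmeasn : ∀ n, Measurable fun x => ENNReal.ofReal (X (min (τ x) n) x) := by
    intro n
    have hσn : IsStoppingTime ℱ (fun x => ((min (τ x) n : ℕ) : WithTop ℕ)) := by
      have : (fun x => ((min (τ x) n : ℕ) : WithTop ℕ)) = fun x => min ((τ x : WithTop ℕ)) n :=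
        funext fun x => WithTop.coe_min _ _
      rw [this]; exact hτ.min_const n
    have h1 : StronglyMeasurable[ℱ n]
        (stoppedValue X fun x => ((min (τ x) n : ℕ) : WithTop ℕ)) :=
      stronglyMeasurable_stoppedValue_of_le hadp.progMeasurable_of_discrete
        hσn fun _ => WithTop.coe_le_coe.mpr (min_le_right _ _)
    have h2 : Measurable fun x => X (min (τ x) n) x :=
      (h1.measurable).mono (ℱ.le n) le_rfl
    exact ENNReal.measurable_ofReal.comp h2
  -- Fatou
  have hptwise : ∀ x, ENNReal.ofReal (X (τ x) x) =
      Filter.liminf (fun n => ENNReal.ofReal (X (min (τ x) n) x)) Filter.atTop := by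
    intro x
    have hconst : (fun n => ENNReal.ofReal (X (min (τ x) n) x)) =ᶠ[Filter.atTop]
        (fun _ => ENNReal.ofReal (X (τ x) x)) := by
      filter_upwards [Filter.eventually_ge_atTop (τ x)] with n hn
      rw [min_eq_left hn]
    exact ((Filter.Tendsto.congr' hconst.symm tendsto_const_nhds).liminf_eq).symm
  calc ∫⁻ x, ENNReal.ofReal (X (τ x) x) ∂μ
      = ∫⁻ x, Filter.liminf (fun n => ENNReal.ofReal (X (min (τ x) n) x)) Filter.atTop ∂μ := by
        simp only [hptwise]
    _ ≤ Filter.liminf (fun n => ∫⁻ x, ENNReal.ofReal (X (min (τ x) n) x) ∂μ) Filter.atTop :=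
        lintegral_liminf_le hmeasn
    _ ≤ Filter.liminf (fun _ : ℕ => (1 : ENNReal)) Filter.atTop :=
        Filter.liminf_le_liminf (Filter.Eventually.of_forall hstop)
    _ = 1 := Filter.liminf_const 1

end
end

section
/- Under the strong central condition with learning rate ω̄, for any fixed learning rate ω ∈ [0, ω̄), the offline GUe-value evaluated at the risk minimizer θ* is an e-value: E[G_{n,off}(θ*)] ≤ 1. -/
open MeasureTheory ProbabilityTheory Filter

noncomputable section

/-- The offline generalized universal e-value `G_{n,off}(θ)`, built from a validation sample
`V : Fin n₂ → Ω → 𝕫` and an estimator `θ̂_{S₁}` computed on the training sample: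
`exp(-ω n₂ (R̂_{S₂}(θ̂_{S₁}) - R̂_{S₂}(θ)))`. -/
def GUeOff {Ω 𝕫 Θ : Type*} (ℓ : Θ → 𝕫 → ℝ) (ω : ℝ) {n2 : ℕ} (V : Fin n2 → Ω → 𝕫)
    (θhatS1 : Ω → Θ) (θ : Θ) (x : Ω) : ℝ :=
  Real.exp (-ω * ∑ j : Fin n2, (ℓ (θhatS1 x) (V j x) - ℓ θ (V j x)))

/-- Tonelli for a finite product of probability measures applied to a product of
single-coordinate functions. -/
lemma lintegral_pi_finset_prod {𝕫 : Type*} [MeasurableSpace 𝕫] (D : Measure 𝕫)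
    [IsProbabilityMeasure D] :
    ∀ (n : ℕ) (g : Fin n → 𝕫 → ENNReal), (∀ j, Measurable (g j)) →
      ∫⁻ v, ∏ j, g j (v j) ∂(Measure.pi fun _ : Fin n => D) = ∏ j, ∫⁻ z, g j z ∂D := by
  intro n
  induction n with
  | zero => intro g hg; simp
  | succ n ih =>
    intro g hg
    have hmp := measurePreserving_piFinSuccAbove (fun _ : Fin (n + 1) => D) 0
    set G : 𝕫 × (Fin n → 𝕫) → ENNReal :=
      fun p => g 0 p.1 * ∏ i : Fin n, g i.succ (p.2 i) with hG
    have hGmeas : Measurable G := by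
      apply Measurable.mul
      · exact (hg 0).comp measurable_fst
      · exact Finset.measurable_prod _ fun i _ =>
          (hg i.succ).comp ((measurable_pi_apply i).comp measurable_snd)
    have key : ∫⁻ v, ∏ j, g j (v j) ∂(Measure.pi fun _ : Fin (n + 1) => D)
        = ∫⁻ p, G p ∂(D.prod (Measure.pi fun _ : Fin n => D)) := by
      rw [← hmp.lintegral_comp hGmeas]
      refine lintegral_congr fun v => ?_
      rw [Fin.prod_univ_succ]
      simp [hG, MeasurableEquiv.piFinSuccAbove, Fin.succAbove_zero, Fin.tail]
    rw [key, lintegral_prod _ hGmeas.aemeasurable]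
    simp only [hG]
    have : ∀ z : 𝕫, ∫⁻ w, g 0 z * ∏ i : Fin n, g i.succ (w i)
        ∂(Measure.pi fun _ : Fin n => D) = g 0 z * ∏ i : Fin n, ∫⁻ y, g i.succ y ∂D := by
      intro z
      rw [lintegral_const_mul _ (Finset.measurable_prod _ fun i _ =>
        (hg i.succ).comp (measurable_pi_apply i)), ih _ fun i => hg i.succ]
    simp_rw [this]
    rw [lintegral_mul_const _ (hg 0), Fin.prod_univ_succ]

/-- Under the strong central condition with learning rate `ω̄`, for any fixed `ω ∈ [0, ω̄)`,
the offline GUe-value evaluated at the risk minimizer `θ*` is an e-value: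
`E[G_{n,off}(θ*)] ≤ 1`. -/
theorem offline_GUe_is_evalue
    {Ω 𝕫 Θ : Type*} [MeasurableSpace Ω] [MeasurableSpace 𝕫] [MeasurableSpace Θ]
    (μ : Measure Ω) [IsProbabilityMeasure μ]
    (D : Measure 𝕫) [IsProbabilityMeasure D]
    (ℓ : Θ → 𝕫 → ℝ) (hℓnn : ∀ θ z, 0 ≤ ℓ θ z)
    (hℓmeas : Measurable (Function.uncurry ℓ))
    (n1 n2 : ℕ)
    -- the full sample: training points `W` and validation points `V`, jointly i.i.d. from `D`
    (W : Fin n1 → Ω → 𝕫) (V : Fin n2 → Ω → 𝕫)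
    (hmeas : ∀ i, Measurable (Sum.elim W V i))
    (hindep : iIndepFun (Sum.elim W V) μ)
    (hiid : ∀ i, μ.map (Sum.elim W V i) = D)
    (θstar : Θ)
    (hmin : ∀ θ : Θ, ∫⁻ z, ENNReal.ofReal (ℓ θstar z) ∂D ≤ ∫⁻ z, ENNReal.ofReal (ℓ θ z) ∂D)
    -- the estimator is a measurable function of the training sample `S₁`
    (θhatS1 : Ω → Θ)
    (hθhat : Measurable[MeasurableSpace.comap (fun x => fun i : Fin n1 => W i x) inferInstance]
      θhatS1)
    (ωbar : ℝ) (hωbar : 0 < ωbar)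
    (hSCC : ∀ θ : Θ, ∀ ω' ∈ Set.Ico (0 : ℝ) ωbar,
      ∫⁻ z, ENNReal.ofReal (Real.exp (-ω' * (ℓ θ z - ℓ θstar z))) ∂D ≤ 1)
    (ω : ℝ) (hω : ω ∈ Set.Ico (0 : ℝ) ωbar) :
    ∫⁻ x, ENNReal.ofReal (GUeOff ℓ ω V θhatS1 θstar x) ∂μ ≤ 1 := by
  classical
  set Wvec : Ω → (Fin n1 → 𝕫) := fun x i => W i x with hWvecdef
  set Vvec : Ω → (Fin n2 → 𝕫) := fun x j => V j x with hVvecdef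
  have hWm : ∀ i, Measurable (W i) := fun i => hmeas (Sum.inl i)
  have hVm : ∀ j, Measurable (V j) := fun j => hmeas (Sum.inr j)
  have hWvecm : Measurable Wvec := measurable_pi_lambda _ fun i => hWm i
  have hVvecm : Measurable Vvec := measurable_pi_lambda _ fun j => hVm j
  have hθm : Measurable θhatS1 := hθhat.mono hWvecm.comap_le le_rfl
  -- independence of the estimator and the validation sample
  have hWV : IndepFun Wvec Vvec μ := by
    have h := hindep.indepFun_finset (Finset.univ.image Sum.inl) (Finset.univ.image Sum.inr)
      (by simp [Finset.disjoint_left]) hmeas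
    exact h.comp (φ := fun u (i : Fin n1) => u ⟨Sum.inl i, by simp⟩)
      (ψ := fun u (j : Fin n2) => u ⟨Sum.inr j, by simp⟩)
      (measurable_pi_lambda _ fun i => measurable_pi_apply _)
      (measurable_pi_lambda _ fun j => measurable_pi_apply _)
  have hθV : IndepFun θhatS1 Vvec μ := by
    rw [IndepFun_iff_Indep] at hWV ⊢
    exact indep_of_indep_of_le_left hWV (Measurable.comap_le hθhat)
  -- the law of the validation sample is the product measure
  have hDV : μ.map Vvec = Measure.pi fun _ : Fin n2 => D := by
    refine (Measure.pi_eq fun s hs => ?_).symm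
    rw [Measure.map_apply hVvecm (MeasurableSet.univ_pi hs)]
    have hpre : Vvec ⁻¹' Set.pi Set.univ s = ⋂ i : Fin n1 ⊕ Fin n2,
        Sum.elim (fun _ : Fin n1 => (Set.univ : Set Ω)) (fun j => V j ⁻¹' s j) i := by
      ext x
      simp [Set.mem_pi, Sum.forall, hVvecdef]
    rw [hpre, hindep.meas_iInter (fun i => ?_)]
    · rw [Fintype.prod_sum_type]
      simp only [Sum.elim_inl, Sum.elim_inr, measure_univ, Finset.prod_const_one, one_mul]
      refine Finset.prod_congr rfl fun j _ => ?_
      rw [← hiid (Sum.inr j), Measure.map_apply (hmeas (Sum.inr j)) (hs j)]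
      rfl
    · rcases i with i | j
      · exact MeasurableSet.univ
      · exact ⟨s j, hs j, rfl⟩
  -- the law of the pair (estimator, validation sample)
  have hpair : μ.map (fun x => (θhatS1 x, Vvec x)) = (μ.map θhatS1).prod (μ.map Vvec) :=
    (indepFun_iff_map_prod_eq_prod_map_map hθm.aemeasurable hVvecm.aemeasurable).mp hθV
  set F : Θ × (Fin n2 → 𝕫) → ENNReal := fun p =>
    ∏ j : Fin n2, ENNReal.ofReal (Real.exp (-ω * (ℓ p.1 (p.2 j) - ℓ θstar (p.2 j)))) with hF
  have hFmeas : Measurable F := by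
    refine Finset.measurable_prod _ fun j _ => ?_
    refine ENNReal.measurable_ofReal.comp (Real.measurable_exp.comp (Measurable.const_mul ?_ _))
    exact (hℓmeas.comp (measurable_fst.prodMk ((measurable_pi_apply j).comp measurable_snd))).sub
      (hℓmeas.comp (measurable_const.prodMk ((measurable_pi_apply j).comp measurable_snd)))
  have hpt : ∀ x, ENNReal.ofReal (GUeOff ℓ ω V θhatS1 θstar x) = F (θhatS1 x, Vvec x) := by
    intro x
    simp only [hF, GUeOff]
    rw [Finset.mul_sum, Real.exp_sum,
      ENNReal.ofReal_prod_of_nonneg (fun j _ => (Real.exp_pos _).le)]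
  have hprob : IsProbabilityMeasure (μ.map θhatS1) := Measure.isProbabilityMeasure_map hθm.aemeasurable
  calc ∫⁻ x, ENNReal.ofReal (GUeOff ℓ ω V θhatS1 θstar x) ∂μ
      = ∫⁻ x, F (θhatS1 x, Vvec x) ∂μ := lintegral_congr hpt
    _ = ∫⁻ p, F p ∂(μ.map fun x => (θhatS1 x, Vvec x)) :=
        (lintegral_map hFmeas (hθm.prodMk hVvecm)).symm
    _ = ∫⁻ p, F p ∂((μ.map θhatS1).prod (Measure.pi fun _ : Fin n2 => D)) := by
        rw [hpair, hDV]
    _ = ∫⁻ θ, ∫⁻ v, F (θ, v) ∂(Measure.pi fun _ : Fin n2 => D) ∂(μ.map θhatS1) :=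
        lintegral_prod _ hFmeas.aemeasurable
    _ ≤ ∫⁻ _, 1 ∂(μ.map θhatS1) := by
        refine lintegral_mono fun θ => ?_
        have hgm : Measurable fun z => ENNReal.ofReal (Real.exp (-ω * (ℓ θ z - ℓ θstar z))) := by
          refine ENNReal.measurable_ofReal.comp
            (Real.measurable_exp.comp (Measurable.const_mul ?_ _))
          exact (hℓmeas.comp (measurable_const.prodMk measurable_id)).sub
            (hℓmeas.comp (measurable_const.prodMk measurable_id))
        have := lintegral_pi_finset_prod D n2
          (fun _ z => ENNReal.ofReal (Real.exp (-ω * (ℓ θ z - ℓ θstar z)))) (fun _ => hgm)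
        simp only [hF]
        rw [this]
        exact le_trans (Finset.prod_le_one (fun j _ => zero_le) (fun j _ => hSCC θ ω hω))
          le_rfl
    _ = 1 := by simp

end
end

section
/- Suppose the strong central condition holds with learning rate ω̄ and take a fixed ω ∈ [0, ω̄); let G_n denote either the online or the offline GUe-value with learning rate ω, and fix α ∈ (0,1). Then for every subset Θ_0 ⊆ Θ containing the risk minimizer θ*, Pr{ inf_{θ∈Θ_0} G_n(θ) ≥ α^{−1} } ≤ α; that is, the test that rejects H_0: θ* ∈ Θ_0 when inf_{θ∈Θ_0} G_n(θ) ≥ α^{−1} has Type I error at most α. -/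
open MeasureTheory ProbabilityTheory Filter

noncomputable section

namespace GUeAux

open ENNReal

/-- σ-algebra generated by the tuple `(f i)_{i ∈ S}`. -/
def mF {Ω 𝕫 ι : Type*} [MeasurableSpace 𝕫] (f : ι → Ω → 𝕫) (S : Finset ι) :
    MeasurableSpace Ω :=
  MeasurableSpace.comap (fun x (j : S) => f j x) inferInstance

/-- For `i ∈ S`, `f i` is measurable w.r.t. the σ-algebra generated by the tuple over `S`. -/
lemma measurable_f_of_mem {Ω 𝕫 ι : Type*} [MeasurableSpace 𝕫]
    (f : ι → Ω → 𝕫) (S : Finset ι) {i : ι} (hi : i ∈ S) :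
    Measurable[mF f S] (f i) := by
  have h : f i = (fun v : S → 𝕫 => v ⟨i, hi⟩) ∘ (fun x (j : S) => f j x) := rfl
  rw [h]
  exact (measurable_pi_apply _).comp (Measurable.of_comap_le le_rfl)

lemma mF_le {Ω 𝕫 ι : Type*} [mΩ : MeasurableSpace Ω] [MeasurableSpace 𝕫]
    (f : ι → Ω → 𝕫) (hfm : ∀ i, Measurable (f i)) (S : Finset ι) : mF f S ≤ mΩ :=
  (measurable_pi_lambda (fun x (j : S) => f j x) fun j => hfm j).comap_le

/-- Anything measurable w.r.t. the tuple over `S` is independent of `f i` for `i ∉ S`. -/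
lemma indep_of_meas {Ω 𝕫 ι : Type*} [MeasurableSpace Ω] [MeasurableSpace 𝕫]
    (μ : Measure Ω) (f : ι → Ω → 𝕫) (hfm : ∀ i, Measurable (f i))
    (hfi : iIndepFun f μ) (S : Finset ι) (i : ι) (hi : i ∉ S)
    {γ : Type*} [MeasurableSpace γ] (H : Ω → γ)
    (hH : Measurable[mF f S] H) :
    IndepFun H (f i) μ := by
  have h1 : IndepFun (fun x (j : S) => f j x) (fun x (j : ({i} : Finset ι)) => f j x) μ :=
    hfi.indepFun_finset S {i} (Finset.disjoint_singleton_right.mpr hi) hfm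
  have h2 : IndepFun (fun x (j : S) => f j x) (f i) μ := by
    have h3 := h1.comp measurable_id
      (measurable_pi_apply (⟨i, Finset.mem_singleton_self i⟩ : ({i} : Finset ι)))
    exact h3
  exact indep_of_indep_of_le_left h2 hH.comap_le

variable {Ω 𝕫 Θ : Type*} [MeasurableSpace Ω] [MeasurableSpace 𝕫] [MeasurableSpace Θ]

/-- The one-step supermartingale bound. -/
lemma step_lemma (μ : Measure Ω) [IsProbabilityMeasure μ]
    (D : Measure 𝕫) [IsProbabilityMeasure D]
    (ℓ : Θ → 𝕫 → ℝ) (hℓmeas : Measurable (Function.uncurry ℓ))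
    (θstar : Θ) (ω : ℝ)
    (hbound : ∀ θ : Θ, ∫⁻ z, ENNReal.ofReal (Real.exp (-ω * (ℓ θ z - ℓ θstar z))) ∂D ≤ 1)
    (A : Ω → ℝ≥0∞) (θf : Ω → Θ) (X : Ω → 𝕫)
    (hH : Measurable fun x => (A x, θf x))
    (hX : Measurable X) (hXD : μ.map X = D)
    (hind : IndepFun (fun x => (A x, θf x)) X μ)
    (hA : ∫⁻ x, A x ∂μ ≤ 1) :
    ∫⁻ x, A x * ENNReal.ofReal (Real.exp (-ω * (ℓ (θf x) (X x) - ℓ θstar (X x)))) ∂μ ≤ 1 := by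
  set H : Ω → ℝ≥0∞ × Θ := fun x => (A x, θf x) with hHdef
  set F : (ℝ≥0∞ × Θ) × 𝕫 → ℝ≥0∞ := fun p =>
    p.1.1 * ENNReal.ofReal (Real.exp (-ω * (ℓ p.1.2 p.2 - ℓ θstar p.2))) with hFdef
  have hℓθstar : Measurable fun z : 𝕫 => ℓ θstar z :=
    hℓmeas.comp (measurable_const.prodMk measurable_id)
  have hmeasθ : ∀ θ : Θ, Measurable fun z : 𝕫 =>
      ENNReal.ofReal (Real.exp (-ω * (ℓ θ z - ℓ θstar z))) := fun θ =>
    ENNReal.measurable_ofReal.comp (Real.measurable_exp.comp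
      (((hℓmeas.comp (measurable_const.prodMk measurable_id)).sub hℓθstar).const_mul (-ω)))
  have hF : Measurable F := by
    apply Measurable.mul (measurable_fst.comp measurable_fst)
    apply ENNReal.measurable_ofReal.comp
    apply Real.measurable_exp.comp
    exact (((hℓmeas.comp ((measurable_snd.comp measurable_fst).prodMk measurable_snd)).sub
      (hℓmeas.comp (measurable_const.prodMk measurable_snd))).const_mul (-ω))
  have hmap : μ.map (fun x => (H x, X x)) = (μ.map H).prod (μ.map X) :=
    (indepFun_iff_map_prod_eq_prod_map_map hH.aemeasurable hX.aemeasurable).mp hind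
  haveI : IsProbabilityMeasure (μ.map H) := Measure.isProbabilityMeasure_map hH.aemeasurable
  calc ∫⁻ x, A x * ENNReal.ofReal (Real.exp (-ω * (ℓ (θf x) (X x) - ℓ θstar (X x)))) ∂μ
      = ∫⁻ x, F (H x, X x) ∂μ := rfl
    _ = ∫⁻ p, F p ∂(μ.map fun x => (H x, X x)) := (lintegral_map hF (hH.prodMk hX)).symm
    _ = ∫⁻ p, F p ∂((μ.map H).prod D) := by rw [hmap, hXD]
    _ = ∫⁻ q, ∫⁻ z, F (q, z) ∂D ∂(μ.map H) := lintegral_prod F hF.aemeasurable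
    _ ≤ ∫⁻ q, q.1 ∂(μ.map H) := by
        refine lintegral_mono fun q => ?_
        have h1 : ∫⁻ z, F (q, z) ∂D
            = q.1 * ∫⁻ z, ENNReal.ofReal (Real.exp (-ω * (ℓ q.2 z - ℓ θstar z))) ∂D :=
          by simp only [hFdef]; exact lintegral_const_mul _ (hmeasθ q.2)
        rw [h1]
        calc q.1 * ∫⁻ z, ENNReal.ofReal (Real.exp (-ω * (ℓ q.2 z - ℓ θstar z))) ∂D
            ≤ q.1 * 1 := mul_le_mul_right (hbound q.2) _
          _ = q.1 := mul_one _
    _ = ∫⁻ x, A x ∂μ := lintegral_map measurable_fst hH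
    _ ≤ 1 := hA

/-- The Markov inequality step. -/
lemma markov (μ : Measure Ω) [IsProbabilityMeasure μ] (g : Ω → ℝ) (hg : Measurable g)
    (hgnn : ∀ x, 0 ≤ g x) (hint : ∫⁻ x, ENNReal.ofReal (g x) ∂μ ≤ 1)
    {α : ℝ} (hα : 0 < α) :
    μ {x | α⁻¹ ≤ g x} ≤ ENNReal.ofReal α := by
  have hset : {x | α⁻¹ ≤ g x} = {x | ENNReal.ofReal α⁻¹ ≤ ENNReal.ofReal (g x)} := by
    ext x
    simp [ENNReal.ofReal_le_ofReal_iff (hgnn x)]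
  have hmk := mul_meas_ge_le_lintegral₀ (μ := μ)
    (ENNReal.measurable_ofReal.comp hg).aemeasurable (ENNReal.ofReal α⁻¹)
  rw [ENNReal.ofReal_inv_of_pos hα] at hmk hset
  have h1 : (ENNReal.ofReal α)⁻¹ * μ {x | α⁻¹ ≤ g x} ≤ 1 := by
    rw [hset]; exact hmk.trans hint
  have hne : ENNReal.ofReal α ≠ 0 := by
    simp [ENNReal.ofReal_eq_zero, not_le, hα]
  calc μ {x | α⁻¹ ≤ g x}
      = ENNReal.ofReal α * ((ENNReal.ofReal α)⁻¹ * μ {x | α⁻¹ ≤ g x}) := by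
        rw [← mul_assoc, ENNReal.mul_inv_cancel hne ENNReal.ofReal_ne_top, one_mul]
    _ ≤ ENNReal.ofReal α * 1 := mul_le_mul_right h1 _
    _ = ENNReal.ofReal α := mul_one _

end GUeAux

/-- Under the strong central condition with learning rate `ω̄` and any fixed `ω ∈ [0, ω̄)`,
the test rejecting `H₀ : θ* ∈ Θ₀` when `inf_{θ ∈ Θ₀} G_n(θ) ≥ α⁻¹` has Type I error at most
`α`, for both the online and the offline GUe-values. -/
theorem GUe_typeI_error
    {Ω 𝕫 Θ : Type*} [MeasurableSpace Ω] [MeasurableSpace 𝕫] [MeasurableSpace Θ]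
    (μ : Measure Ω) [IsProbabilityMeasure μ]
    (D : Measure 𝕫) [IsProbabilityMeasure D]
    (ℓ : Θ → 𝕫 → ℝ) (hℓnn : ∀ θ z, 0 ≤ ℓ θ z)
    (hℓmeas : Measurable (Function.uncurry ℓ))
    (θstar : Θ)
    (hmin : ∀ θ : Θ, ∫⁻ z, ENNReal.ofReal (ℓ θstar z) ∂D ≤ ∫⁻ z, ENNReal.ofReal (ℓ θ z) ∂D)
    (ωbar : ℝ) (hωbar : 0 < ωbar)
    (hSCC : ∀ θ : Θ, ∀ ω' ∈ Set.Ico (0 : ℝ) ωbar,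
      ∫⁻ z, ENNReal.ofReal (Real.exp (-ω' * (ℓ θ z - ℓ θstar z))) ∂D ≤ 1)
    (ω : ℝ) (hω : ω ∈ Set.Ico (0 : ℝ) ωbar)
    (α : ℝ) (hα : α ∈ Set.Ioo (0 : ℝ) 1)
    -- online data and estimators
    (Z : ℕ → Ω → 𝕫) (hZmeas : ∀ i, Measurable (Z i))
    (hindep : iIndepFun Z μ)
    (hiid : ∀ i, μ.map (Z i) = D)
    (θhat : ℕ → Ω → Θ) (θ0 : Θ) (hθ0 : θhat 0 = fun _ => θ0)
    (hθhat : ∀ k, Measurable[natFiltration Z hZmeas k] (θhat k))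
    -- offline data (training `W`, validation `V`, jointly i.i.d.) and estimator
    (n1 n2 : ℕ) (W : Fin n1 → Ω → 𝕫) (V : Fin n2 → Ω → 𝕫)
    (hmeasWV : ∀ i, Measurable (Sum.elim W V i))
    (hindepWV : iIndepFun (Sum.elim W V) μ)
    (hiidWV : ∀ i, μ.map (Sum.elim W V i) = D)
    (θhatS1 : Ω → Θ)
    (hθhatS1 :
      Measurable[MeasurableSpace.comap (fun x => fun i : Fin n1 => W i x) inferInstance] θhatS1)
    -- the null hypothesis contains the risk minimizer
    (Θ0 : Set Θ) (hΘ0 : θstar ∈ Θ0) :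
    (∀ n : ℕ,
      μ {x | α⁻¹ ≤ ⨅ θ : Θ0, GUeOn ℓ ω Z θhat (θ : Θ) n x} ≤ ENNReal.ofReal α) ∧
    μ {x | α⁻¹ ≤ ⨅ θ : Θ0, GUeOff ℓ ω V θhatS1 (θ : Θ) x} ≤ ENNReal.ofReal α := by
  have hbound : ∀ θ : Θ, ∫⁻ z, ENNReal.ofReal (Real.exp (-ω * (ℓ θ z - ℓ θstar z))) ∂D ≤ 1 :=
    fun θ => hSCC θ ω hω
  -- the generic Markov argument
  have key : ∀ (g : Θ → Ω → ℝ), (∀ θ x, 0 ≤ g θ x) → Measurable (g θstar) →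
      (∫⁻ x, ENNReal.ofReal (g θstar x) ∂μ ≤ 1) →
      μ {x | α⁻¹ ≤ ⨅ θ : Θ0, g θ x} ≤ ENNReal.ofReal α := by
    intro g hgnn hgm hgint
    refine le_trans (measure_mono ?_) (GUeAux.markov μ (g θstar) hgm (hgnn θstar) hgint hα.1)
    intro x hx
    simp only [Set.mem_setOf_eq] at hx ⊢
    refine le_trans hx (ciInf_le ⟨0, ?_⟩ (⟨θstar, hΘ0⟩ : Θ0))
    rintro y ⟨θ, rfl⟩
    exact hgnn θ x
  -- online integral bound
  have honInt : ∀ n, ∫⁻ x, ENNReal.ofReal (GUeOn ℓ ω Z θhat θstar n x) ∂μ ≤ 1 := by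
    intro n
    induction n with
    | zero => simp [GUeOn]
    | succ n ih =>
      have hsplit : ∀ x, ENNReal.ofReal (GUeOn ℓ ω Z θhat θstar (n+1) x)
          = ENNReal.ofReal (GUeOn ℓ ω Z θhat θstar n x)
            * ENNReal.ofReal (Real.exp (-ω * (ℓ (θhat n x) (Z n x) - ℓ θstar (Z n x)))) := by
        intro x
        rw [GUeOn, GUeOn, Finset.sum_range_succ, mul_add, Real.exp_add,
          ENNReal.ofReal_mul (Real.exp_nonneg _)]
      simp only [hsplit]
      have hZS : ∀ i, i ∈ Finset.range n → Measurable[GUeAux.mF Z (Finset.range n)] (Z i) :=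
        fun i hi => GUeAux.measurable_f_of_mem Z (Finset.range n) hi
      have hfil : ∀ i, i ≤ n → natFiltration Z hZmeas i ≤ GUeAux.mF Z (Finset.range n) := by
        intro i hi
        refine iSup₂_le fun j hj => ?_
        exact (hZS j (Finset.mem_range.mpr (lt_of_lt_of_le hj hi))).comap_le
      have hθS : ∀ i, i ≤ n → Measurable[GUeAux.mF Z (Finset.range n)] (θhat i) := fun i hi =>
        (hθhat i).mono (hfil i hi) le_rfl
      have hAS : Measurable[GUeAux.mF Z (Finset.range n)]
          fun x => ENNReal.ofReal (GUeOn ℓ ω Z θhat θstar n x) := by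
        apply ENNReal.measurable_ofReal.comp
        apply Real.measurable_exp.comp
        apply Measurable.const_mul
        apply Finset.measurable_sum
        intro i hi
        have hZi : Measurable[GUeAux.mF Z (Finset.range n)] (Z i) := hZS i hi
        exact (hℓmeas.comp ((hθS i (Finset.mem_range.mp hi).le).prodMk hZi)).sub
          (hℓmeas.comp (measurable_const.prodMk hZi))
      have hHS : Measurable[GUeAux.mF Z (Finset.range n)] fun x =>
          (ENNReal.ofReal (GUeOn ℓ ω Z θhat θstar n x), θhat n x) :=
        hAS.prodMk (hθS n le_rfl)
      refine GUeAux.step_lemma μ D ℓ hℓmeas θstar ω hbound _ (θhat n) (Z n)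
        (hHS.mono (GUeAux.mF_le Z hZmeas _) le_rfl) (hZmeas n) (hiid n) ?_ ih
      exact GUeAux.indep_of_meas μ Z hZmeas hindep (Finset.range n) n (by simp) _ hHS
  -- offline integral bound
  have hWm : ∀ i, Measurable (W i) := fun i => hmeasWV (Sum.inl i)
  have hVm : ∀ j, Measurable (V j) := fun j => hmeasWV (Sum.inr j)
  have hoffInt : ∀ k, ∫⁻ x, ENNReal.ofReal (Real.exp
      (-ω * ∑ j ∈ Finset.univ.filter (fun j : Fin n2 => (j : ℕ) < k),
        (ℓ (θhatS1 x) (V j x) - ℓ θstar (V j x)))) ∂μ ≤ 1 := by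
    intro k
    induction k with
    | zero => simp
    | succ k ih =>
      by_cases hk : k < n2
      · set jk : Fin n2 := ⟨k, hk⟩ with hjk
        have hmem : jk ∉ Finset.univ.filter (fun j : Fin n2 => (j : ℕ) < k) := by
          simp [hjk]
        have hins : Finset.univ.filter (fun j : Fin n2 => (j : ℕ) < k + 1)
            = insert jk (Finset.univ.filter (fun j : Fin n2 => (j : ℕ) < k)) := by
          ext j
          simp only [Finset.mem_insert, Finset.mem_filter, Finset.mem_univ, true_and,
            Nat.lt_succ_iff_lt_or_eq, Fin.ext_iff, hjk]
          exact or_comm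
        have hsplit : ∀ x, ENNReal.ofReal (Real.exp
            (-ω * ∑ j ∈ Finset.univ.filter (fun j : Fin n2 => (j : ℕ) < k + 1),
              (ℓ (θhatS1 x) (V j x) - ℓ θstar (V j x))))
            = ENNReal.ofReal (Real.exp
                (-ω * ∑ j ∈ Finset.univ.filter (fun j : Fin n2 => (j : ℕ) < k),
                  (ℓ (θhatS1 x) (V j x) - ℓ θstar (V j x))))
              * ENNReal.ofReal (Real.exp
                  (-ω * (ℓ (θhatS1 x) (V jk x) - ℓ θstar (V jk x)))) := by
          intro x
          rw [hins, Finset.sum_insert hmem, mul_add, Real.exp_add, mul_comm,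
            ENNReal.ofReal_mul (Real.exp_nonneg _)]
        simp only [hsplit]
        set S : Finset (Fin n1 ⊕ Fin n2) :=
          (Finset.univ.image Sum.inl)
            ∪ ((Finset.univ.filter (fun j : Fin n2 => (j : ℕ) < k)).image Sum.inr) with hSdef
        have hVS : ∀ j : Fin n2, (j : ℕ) < k →
            Measurable[GUeAux.mF (Sum.elim W V) S] (V j) := by
          intro j hj
          have hjS : (Sum.inr j : Fin n1 ⊕ Fin n2) ∈ S := by
            simp [hSdef, hj]
          exact GUeAux.measurable_f_of_mem (Sum.elim W V) S hjS
        have hWle : MeasurableSpace.comap (fun x => fun i : Fin n1 => W i x) inferInstance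
            ≤ GUeAux.mF (Sum.elim W V) S := by
          have hφ : (fun x => fun i : Fin n1 => W i x)
              = (fun v : (↥S) → 𝕫 =>
                  fun i : Fin n1 => v ⟨Sum.inl i, by simp [hSdef]⟩)
                ∘ (fun x (j : S) => Sum.elim W V j x) := rfl
          rw [hφ, ← MeasurableSpace.comap_comp]
          exact MeasurableSpace.comap_mono
            (Measurable.comap_le (measurable_pi_lambda _ fun i => measurable_pi_apply _))
        have hθS : Measurable[GUeAux.mF (Sum.elim W V) S] θhatS1 :=
          hθhatS1.mono hWle le_rfl
        have hAS : Measurable[GUeAux.mF (Sum.elim W V) S] fun x => ENNReal.ofReal (Real.exp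
            (-ω * ∑ j ∈ Finset.univ.filter (fun j : Fin n2 => (j : ℕ) < k),
              (ℓ (θhatS1 x) (V j x) - ℓ θstar (V j x)))) := by
          apply ENNReal.measurable_ofReal.comp
          apply Real.measurable_exp.comp
          apply Measurable.const_mul
          apply Finset.measurable_sum
          intro j hj
          have hVj : Measurable[GUeAux.mF (Sum.elim W V) S] (V j) :=
            hVS j (by simpa using hj)
          exact (hℓmeas.comp (hθS.prodMk hVj)).sub
            (hℓmeas.comp (measurable_const.prodMk hVj))
        have hHS : Measurable[GUeAux.mF (Sum.elim W V) S] fun x =>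
            (ENNReal.ofReal (Real.exp
              (-ω * ∑ j ∈ Finset.univ.filter (fun j : Fin n2 => (j : ℕ) < k),
                (ℓ (θhatS1 x) (V j x) - ℓ θstar (V j x)))), θhatS1 x) :=
          hAS.prodMk hθS
        have hnotin : (Sum.inr jk : Fin n1 ⊕ Fin n2) ∉ S := by
          simp [hSdef, hjk]
        refine GUeAux.step_lemma μ D ℓ hℓmeas θstar ω hbound _ θhatS1 (V jk)
          (hHS.mono (GUeAux.mF_le (Sum.elim W V) hmeasWV _) le_rfl) (hVm jk)
          (hiidWV (Sum.inr jk)) ?_ ih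
        exact GUeAux.indep_of_meas μ (Sum.elim W V) hmeasWV hindepWV S (Sum.inr jk) hnotin _ hHS
      · have hfe : (Finset.univ.filter fun j : Fin n2 => (j : ℕ) < k + 1)
            = Finset.univ.filter fun j : Fin n2 => (j : ℕ) < k :=
          Finset.filter_congr fun j _ =>
            ⟨fun _ => lt_of_lt_of_le j.2 (not_lt.mp hk), fun h => Nat.lt_succ_of_lt h⟩
        simpa only [hfe] using ih
  -- ambient measurability
  have hθm : ∀ i, Measurable (θhat i) := fun i =>
    (hθhat i).mono ((natFiltration Z hZmeas).le i) le_rfl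
  have hθS1m : Measurable θhatS1 :=
    hθhatS1.mono
      (Measurable.comap_le (measurable_pi_lambda _ fun i => hWm i)) le_rfl
  have hGOnm : ∀ n, Measurable fun x => GUeOn ℓ ω Z θhat θstar n x := by
    intro n
    apply Real.measurable_exp.comp
    apply Measurable.const_mul
    apply Finset.measurable_sum
    intro i _
    exact (hℓmeas.comp ((hθm i).prodMk (hZmeas i))).sub
      (hℓmeas.comp (measurable_const.prodMk (hZmeas i)))
  have hGOffm : Measurable fun x => GUeOff ℓ ω V θhatS1 θstar x := by
    apply Real.measurable_exp.comp
    apply Measurable.const_mul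
    apply Finset.measurable_sum
    intro j _
    exact (hℓmeas.comp (hθS1m.prodMk (hVm j))).sub
      (hℓmeas.comp (measurable_const.prodMk (hVm j)))
  have hPG : ∀ x, GUeOff ℓ ω V θhatS1 θstar x = Real.exp
      (-ω * ∑ j ∈ Finset.univ.filter (fun j : Fin n2 => (j : ℕ) < n2),
        (ℓ (θhatS1 x) (V j x) - ℓ θstar (V j x))) := by
    intro x
    simp only [GUeOff]
    rw [Finset.filter_true_of_mem (fun j _ => j.2)]
  constructor
  · intro n
    exact key (fun θ x => GUeOn ℓ ω Z θhat θ n x) (fun θ x => Real.exp_nonneg _)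
      (hGOnm n) (honInt n)
  · refine key (fun θ x => GUeOff ℓ ω V θhatS1 θ x) (fun θ x => Real.exp_nonneg _)
      hGOffm ?_
    simp only [hPG]
    exact hoffInt n2
end
end

section
/- Suppose the strong central condition holds with learning rate ω̄ and take a fixed ω ∈ [0, ω̄); let G_n denote either the online or the offline GUe-value with learning rate ω, and fix α ∈ (0,1). Then the set estimator C_α(Z^n) = { θ ∈ Θ : G_n(θ) < α^{−1} } has frequentist coverage probability at least 1 − α for the risk minimizer: Pr{ θ* ∈ C_α(Z^n) } ≥ 1 − α. -/
open MeasureTheory ProbabilityTheory Filter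

noncomputable section

/-- The σ-algebra generated by the training data and the first `k` validation points. -/
def offAlg {Ω 𝕫 : Type*} [MeasurableSpace 𝕫] {n1 n2 : ℕ}
    (W : Fin n1 → Ω → 𝕫) (V : Fin n2 → Ω → 𝕫) (k : ℕ) : MeasurableSpace Ω :=
  ⨆ i ∈ (Set.range Sum.inl ∪ Sum.inr '' {j : Fin n2 | (j : ℕ) < k}),
    MeasurableSpace.comap (Sum.elim W V i) inferInstance

lemma pi_lambda_meas {Ω 𝕫 : Type*} {m' : MeasurableSpace Ω} [MeasurableSpace 𝕫] {n : ℕ}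
    {W : Fin n → Ω → 𝕫} (h : ∀ i, Measurable[m'] (W i)) :
    Measurable[m'] (fun x => fun i : Fin n => W i x) :=
  measurable_pi_lambda _ h

section StepBound

variable {Ω 𝕫 Θ : Type*} {𝔪 : MeasurableSpace Ω} [mΩ : MeasurableSpace Ω]
  [MeasurableSpace 𝕫] [MeasurableSpace Θ]

/-- Key one-step bound: if `X` is `𝔪`-measurable with `∫ X ≤ 1`, `T` is `𝔪`-measurable,
`Y` has law `D` and is independent of `𝔪`, then multiplying by the SCC factor keeps the
integral at most `1`. -/
lemma step_bound (ℓ : Θ → 𝕫 → ℝ) (hℓmeas : Measurable (Function.uncurry ℓ)) (θstar : Θ) (ω : ℝ)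
    (μ : Measure Ω) [IsProbabilityMeasure μ] (D : Measure 𝕫) [IsProbabilityMeasure D]
    (hSCC : ∀ θ, ∫⁻ z, ENNReal.ofReal (Real.exp (-ω * (ℓ θ z - ℓ θstar z))) ∂D ≤ 1)
    (h𝔪 : 𝔪 ≤ mΩ)
    (X : Ω → ENNReal) (hX : Measurable[𝔪] X) (hXint : ∫⁻ x, X x ∂μ ≤ 1)
    (T : Ω → Θ) (hT : Measurable[𝔪] T)
    (Y : Ω → 𝕫) (hY : Measurable Y) (hYD : μ.map Y = D)
    (hind : Indep 𝔪 (MeasurableSpace.comap Y inferInstance) μ) :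
    ∫⁻ x, X x * ENNReal.ofReal (Real.exp (-ω * (ℓ (T x) (Y x) - ℓ θstar (Y x)))) ∂μ ≤ 1 := by
  set A : Ω → ENNReal × Θ := fun x => (X x, T x) with hAdef
  have hA𝔪 : Measurable[𝔪] A := hX.prodMk hT
  have hA : Measurable A := hA𝔪.mono h𝔪 le_rfl
  have hAY : IndepFun A Y μ := by
    rw [indepFun_iff_measure_inter_preimage_eq_mul]
    rw [Indep_iff] at hind
    exact fun s t hs ht => hind _ _ (hA𝔪 hs) ⟨t, ht, rfl⟩
  have hmap : μ.map (fun x => (A x, Y x)) = (μ.map A).prod D := by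
    rw [← hYD]
    exact (indepFun_iff_map_prod_eq_prod_map_map hA.aemeasurable hY.aemeasurable).mp hAY
  have hg : Measurable (fun p : (ENNReal × Θ) × 𝕫 =>
      p.1.1 * ENNReal.ofReal (Real.exp (-ω * (ℓ p.1.2 p.2 - ℓ θstar p.2)))) := by
    apply Measurable.mul
    · exact measurable_fst.fst
    · have h1 : Measurable fun p : (ENNReal × Θ) × 𝕫 => ℓ p.1.2 p.2 :=
        hℓmeas.comp (measurable_fst.snd.prodMk measurable_snd)
      have h2 : Measurable fun p : (ENNReal × Θ) × 𝕫 => ℓ θstar p.2 :=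
        hℓmeas.comp (measurable_const.prodMk measurable_snd)
      exact ENNReal.measurable_ofReal.comp (Real.measurable_exp.comp ((h1.sub h2).const_mul (-ω)))
  have key : ∫⁻ x, X x * ENNReal.ofReal (Real.exp (-ω * (ℓ (T x) (Y x) - ℓ θstar (Y x)))) ∂μ
      = ∫⁻ p : (ENNReal × Θ) × 𝕫,
        p.1.1 * ENNReal.ofReal (Real.exp (-ω * (ℓ p.1.2 p.2 - ℓ θstar p.2)))
          ∂((μ.map A).prod D) := by
    rw [← hmap, lintegral_map hg (hA.prodMk hY)]
  rw [key, lintegral_prod _ hg.aemeasurable]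
  have hbound : ∫⁻ a : ENNReal × Θ, ∫⁻ z,
        a.1 * ENNReal.ofReal (Real.exp (-ω * (ℓ a.2 z - ℓ θstar z))) ∂D ∂(μ.map A)
      ≤ ∫⁻ a : ENNReal × Θ, a.1 ∂(μ.map A) := by
    refine lintegral_mono fun a => ?_
    have hm2 : Measurable fun z => ENNReal.ofReal (Real.exp (-ω * (ℓ a.2 z - ℓ θstar z))) := by
      have h1 : Measurable fun z => ℓ a.2 z := hℓmeas.comp (measurable_const.prodMk measurable_id)
      have h2 : Measurable fun z => ℓ θstar z :=
        hℓmeas.comp (measurable_const.prodMk measurable_id)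
      exact ENNReal.measurable_ofReal.comp (Real.measurable_exp.comp ((h1.sub h2).const_mul (-ω)))
    rw [lintegral_const_mul _ hm2]
    calc a.1 * ∫⁻ z, ENNReal.ofReal (Real.exp (-ω * (ℓ a.2 z - ℓ θstar z))) ∂D
        ≤ a.1 * 1 := mul_le_mul_right (hSCC a.2) a.1
      _ = a.1 := mul_one a.1
  refine hbound.trans ?_
  have heq2 : ∫⁻ a : ENNReal × Θ, a.1 ∂(μ.map A) = ∫⁻ x, X x ∂μ := by
    rw [lintegral_map measurable_fst hA]
  rw [heq2]; exact hXint

end StepBound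

section Cov

variable {Ω : Type*} [MeasurableSpace Ω]

/-- Coverage from an e-value bound via Markov's inequality. -/
lemma coverage_of_evalue (μ : Measure Ω) [IsProbabilityMeasure μ]
    (G : Ω → ℝ) (hG : Measurable G) (hGnn : ∀ x, 0 ≤ G x)
    (hint : ∫⁻ x, ENNReal.ofReal (G x) ∂μ ≤ 1)
    (α : ℝ) (hα : α ∈ Set.Ioo (0 : ℝ) 1) :
    ENNReal.ofReal (1 - α) ≤ μ {x | G x < α⁻¹} := by
  obtain ⟨hα0, hα1⟩ := hα
  set s : Set Ω := {x | α⁻¹ ≤ G x} with hsdef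
  have hs : MeasurableSet s := measurableSet_le measurable_const hG
  have hset : {x | G x < α⁻¹} = sᶜ := by
    ext x; simp [hsdef, not_le]
  have hmarkov : ENNReal.ofReal α⁻¹ * μ s ≤ 1 := by
    have h := mul_meas_ge_le_lintegral₀ (μ := μ)
      (ENNReal.measurable_ofReal.comp hG).aemeasurable (ENNReal.ofReal α⁻¹)
    have hseq : {x | ENNReal.ofReal α⁻¹ ≤ (ENNReal.ofReal ∘ G) x} = s := by
      ext x; simp [hsdef, Function.comp, ENNReal.ofReal_le_ofReal_iff (hGnn x)]
    rw [hseq] at h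
    simp only [Function.comp] at h
    exact h.trans hint
  have hμs : μ s ≤ ENNReal.ofReal α := by
    have h1 : μ s ≤ (ENNReal.ofReal α⁻¹)⁻¹ :=
      ENNReal.le_inv_iff_mul_le.mpr (by rwa [mul_comm])
    rwa [ENNReal.ofReal_inv_of_pos hα0, inv_inv] at h1
  rw [hset, prob_compl_eq_one_sub hs]
  calc ENNReal.ofReal (1 - α) = 1 - ENNReal.ofReal α := by
        rw [ENNReal.ofReal_sub 1 hα0.le, ENNReal.ofReal_one]
    _ ≤ 1 - μ s := tsub_le_tsub_left hμs 1

end Cov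

/-- Under the strong central condition with learning rate `ω̄` and any fixed `ω ∈ [0, ω̄)`,
the set estimator `C_α = {θ : G_n(θ) < α⁻¹}` covers the risk minimizer `θ*` with probability
at least `1 - α`, for both the online and the offline GUe-values. -/
theorem GUe_coverage
    {Ω 𝕫 Θ : Type*} [MeasurableSpace Ω] [MeasurableSpace 𝕫] [MeasurableSpace Θ]
    (μ : Measure Ω) [IsProbabilityMeasure μ]
    (D : Measure 𝕫) [IsProbabilityMeasure D]
    (ℓ : Θ → 𝕫 → ℝ) (hℓnn : ∀ θ z, 0 ≤ ℓ θ z)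
    (hℓmeas : Measurable (Function.uncurry ℓ))
    (θstar : Θ)
    (hmin : ∀ θ : Θ, ∫⁻ z, ENNReal.ofReal (ℓ θstar z) ∂D ≤ ∫⁻ z, ENNReal.ofReal (ℓ θ z) ∂D)
    (ωbar : ℝ) (hωbar : 0 < ωbar)
    (hSCC : ∀ θ : Θ, ∀ ω' ∈ Set.Ico (0 : ℝ) ωbar,
      ∫⁻ z, ENNReal.ofReal (Real.exp (-ω' * (ℓ θ z - ℓ θstar z))) ∂D ≤ 1)
    (ω : ℝ) (hω : ω ∈ Set.Ico (0 : ℝ) ωbar)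
    (α : ℝ) (hα : α ∈ Set.Ioo (0 : ℝ) 1)
    -- online data and estimators
    (Z : ℕ → Ω → 𝕫) (hZmeas : ∀ i, Measurable (Z i))
    (hindep : iIndepFun Z μ)
    (hiid : ∀ i, μ.map (Z i) = D)
    (θhat : ℕ → Ω → Θ) (θ0 : Θ) (hθ0 : θhat 0 = fun _ => θ0)
    (hθhat : ∀ k, Measurable[natFiltration Z hZmeas k] (θhat k))
    -- offline data (training `W`, validation `V`, jointly i.i.d.) and estimator
    (n1 n2 : ℕ) (W : Fin n1 → Ω → 𝕫) (V : Fin n2 → Ω → 𝕫)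
    (hmeasWV : ∀ i, Measurable (Sum.elim W V i))
    (hindepWV : iIndepFun (Sum.elim W V) μ)
    (hiidWV : ∀ i, μ.map (Sum.elim W V i) = D)
    (θhatS1 : Ω → Θ)
    (hθhatS1 :
      Measurable[MeasurableSpace.comap (fun x => fun i : Fin n1 => W i x) inferInstance] θhatS1)
    :
    (∀ n : ℕ,
      ENNReal.ofReal (1 - α) ≤ μ {x | GUeOn ℓ ω Z θhat θstar n x < α⁻¹}) ∧
    ENNReal.ofReal (1 - α) ≤ μ {x | GUeOff ℓ ω V θhatS1 θstar x < α⁻¹} := by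
  have hSCCω : ∀ θ, ∫⁻ z, ENNReal.ofReal (Real.exp (-ω * (ℓ θ z - ℓ θstar z))) ∂D ≤ 1 :=
    fun θ => hSCC θ ω hω
  -- ambient measurability of the estimators
  have hθhatM : ∀ k, Measurable (θhat k) :=
    fun k => (hθhat k).mono ((natFiltration Z hZmeas).le k) le_rfl
  have hWtuple : Measurable (fun x => fun i : Fin n1 => W i x) :=
    measurable_pi_lambda _ fun i => hmeasWV (Sum.inl i)
  have hθS1M : Measurable θhatS1 := hθhatS1.mono hWtuple.comap_le le_rfl
  constructor
  · -- online part
    intro n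
    -- the integral bound, by induction
    have hint : ∀ m : ℕ, ∫⁻ x, ∏ i ∈ Finset.range m,
        ENNReal.ofReal (Real.exp (-ω * (ℓ (θhat i x) (Z i x) - ℓ θstar (Z i x)))) ∂μ ≤ 1 := by
      intro m
      induction m with
      | zero => simp
      | succ m ih =>
        simp only [Finset.prod_range_succ]
        have h𝔪 : (natFiltration Z hZmeas) m ≤ _ := (natFiltration Z hZmeas).le m
        have hX : Measurable[(natFiltration Z hZmeas) m] fun x => ∏ i ∈ Finset.range m,
            ENNReal.ofReal (Real.exp (-ω * (ℓ (θhat i x) (Z i x) - ℓ θstar (Z i x)))) := by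
          refine Finset.measurable_prod _ fun i hi => ?_
          have him : i < m := Finset.mem_range.mp hi
          have hθi : Measurable[(natFiltration Z hZmeas) m] (θhat i) :=
            (hθhat i).mono ((natFiltration Z hZmeas).mono him.le) le_rfl
          have hZi : Measurable[(natFiltration Z hZmeas) m] (Z i) := by
            refine Measurable.of_comap_le ?_
            exact le_biSup (fun j => MeasurableSpace.comap (Z j) inferInstance)
              (Set.mem_Iio.mpr him)
          have h1 : Measurable[(natFiltration Z hZmeas) m] fun x => ℓ (θhat i x) (Z i x) :=
            hℓmeas.comp (hθi.prodMk hZi)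
          have h2 : Measurable[(natFiltration Z hZmeas) m] fun x => ℓ θstar (Z i x) :=
            hℓmeas.comp (measurable_const.prodMk hZi)
          exact ENNReal.measurable_ofReal.comp
            (Real.measurable_exp.comp ((h1.sub h2).const_mul (-ω)))
        have hind : Indep ((natFiltration Z hZmeas) m)
            (MeasurableSpace.comap (Z m) inferInstance) μ := by
          have h0 : iIndep (fun i => MeasurableSpace.comap (Z i) inferInstance) μ :=
            (iIndepFun_iff_iIndep _ _ _).mp hindep
          have h1 := indep_iSup_of_disjoint (fun i => (hZmeas i).comap_le) h0
            (S := Set.Iio m) (T := {m}) (by simp [Set.disjoint_singleton_right])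
          change Indep (⨆ i ∈ Set.Iio m, MeasurableSpace.comap (Z i) inferInstance) _ μ
          simpa using h1
        exact step_bound ℓ hℓmeas θstar ω μ D hSCCω h𝔪 _ hX ih _ (hθhat m) _ (hZmeas m)
          (hiid m) hind
    -- rewrite the e-value as the product
    have hprod : ∀ x, ENNReal.ofReal (GUeOn ℓ ω Z θhat θstar n x) = ∏ i ∈ Finset.range n,
        ENNReal.ofReal (Real.exp (-ω * (ℓ (θhat i x) (Z i x) - ℓ θstar (Z i x)))) := by
      intro x
      rw [GUeOn, Finset.mul_sum, Real.exp_sum]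
      exact ENNReal.ofReal_prod_of_nonneg fun i _ => (Real.exp_pos _).le
    have hGmeas : Measurable (GUeOn ℓ ω Z θhat θstar n) := by
      apply Real.measurable_exp.comp
      apply Measurable.const_mul
      refine Finset.measurable_sum _ fun i _ => ?_
      exact (hℓmeas.comp ((hθhatM i).prodMk (hZmeas i))).sub
        (hℓmeas.comp (measurable_const.prodMk (hZmeas i)))
    refine coverage_of_evalue μ _ hGmeas (fun x => (Real.exp_pos _).le) ?_ α hα
    calc ∫⁻ x, ENNReal.ofReal (GUeOn ℓ ω Z θhat θstar n x) ∂μ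
        = ∫⁻ x, ∏ i ∈ Finset.range n,
            ENNReal.ofReal (Real.exp (-ω * (ℓ (θhat i x) (Z i x) - ℓ θstar (Z i x)))) ∂μ :=
          lintegral_congr hprod
      _ ≤ 1 := hint n
  · -- offline part
    have hint : ∀ k : ℕ, ∫⁻ x, ∏ j ∈ Finset.univ.filter (fun j : Fin n2 => (j : ℕ) < k),
        ENNReal.ofReal (Real.exp (-ω * (ℓ (θhatS1 x) (V j x) - ℓ θstar (V j x)))) ∂μ ≤ 1 := by
      intro k
      induction k with
      | zero => simp
      | succ k ih =>
        by_cases hk : k < n2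
        · -- peel off the factor at index `⟨k, hk⟩`
          have hins : Finset.univ.filter (fun j : Fin n2 => (j : ℕ) < k + 1) =
              insert ⟨k, hk⟩ (Finset.univ.filter fun j : Fin n2 => (j : ℕ) < k) := by
            ext j
            simp only [Finset.mem_filter, Finset.mem_univ, true_and, Finset.mem_insert,
              Fin.ext_iff]
            omega
          have hnm : (⟨k, hk⟩ : Fin n2) ∉
              Finset.univ.filter (fun j : Fin n2 => (j : ℕ) < k) := by simp
          have hrw : ∀ x, ∏ j ∈ Finset.univ.filter (fun j : Fin n2 => (j : ℕ) < k + 1),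
              ENNReal.ofReal (Real.exp (-ω * (ℓ (θhatS1 x) (V j x) - ℓ θstar (V j x))))
              = (∏ j ∈ Finset.univ.filter (fun j : Fin n2 => (j : ℕ) < k),
                  ENNReal.ofReal (Real.exp (-ω * (ℓ (θhatS1 x) (V j x) - ℓ θstar (V j x)))))
                * ENNReal.ofReal (Real.exp (-ω *
                    (ℓ (θhatS1 x) (V ⟨k, hk⟩ x) - ℓ θstar (V ⟨k, hk⟩ x)))) := by
            intro x
            rw [hins, Finset.prod_insert hnm, mul_comm]
          rw [lintegral_congr hrw]
          -- the σ-algebra generated by `W` and the first `k` validation points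
          have h𝔪le : offAlg W V k ≤ _ := iSup₂_le fun i _ => (hmeasWV i).comap_le
          have hW𝔪 : ∀ i : Fin n1, Measurable[offAlg W V k] (W i) := by
            intro i
            refine Measurable.of_comap_le ?_
            exact le_biSup (fun i => MeasurableSpace.comap (Sum.elim W V i) inferInstance)
              (i := Sum.inl i) (Set.mem_union_left _ (Set.mem_range_self i))
          have hV𝔪 : ∀ j : Fin n2, (j : ℕ) < k → Measurable[offAlg W V k] (V j) := by
            intro j hj
            refine Measurable.of_comap_le ?_
            exact le_biSup (fun i => MeasurableSpace.comap (Sum.elim W V i) inferInstance)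
              (i := Sum.inr j) (Set.mem_union_right _ ⟨j, hj, rfl⟩)
          have hT𝔪 : Measurable[offAlg W V k] θhatS1 := by
            refine hθhatS1.mono ?_ le_rfl
            have htup : Measurable[offAlg W V k] (fun x => fun i : Fin n1 => W i x) :=
              pi_lambda_meas hW𝔪
            exact Measurable.comap_le htup
          have hX : Measurable[offAlg W V k] fun x =>
              ∏ j ∈ Finset.univ.filter (fun j : Fin n2 => (j : ℕ) < k),
                ENNReal.ofReal (Real.exp (-ω * (ℓ (θhatS1 x) (V j x) - ℓ θstar (V j x)))) := by
            refine Finset.measurable_prod _ fun j hj => ?_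
            have hjk : (j : ℕ) < k := (Finset.mem_filter.mp hj).2
            have h1 : Measurable[offAlg W V k] fun x => ℓ (θhatS1 x) (V j x) :=
              hℓmeas.comp (hT𝔪.prodMk (hV𝔪 j hjk))
            have h2 : Measurable[offAlg W V k] fun x => ℓ θstar (V j x) :=
              hℓmeas.comp (measurable_const.prodMk (hV𝔪 j hjk))
            exact ENNReal.measurable_ofReal.comp
              (Real.measurable_exp.comp ((h1.sub h2).const_mul (-ω)))
          have hind : Indep (offAlg W V k)
              (MeasurableSpace.comap (V ⟨k, hk⟩) inferInstance) μ := by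
            have h0 : iIndep
                (fun i => MeasurableSpace.comap (Sum.elim W V i) inferInstance) μ :=
              (iIndepFun_iff_iIndep _ _ _).mp hindepWV
            have hdisj : Disjoint
                (Set.range Sum.inl ∪ Sum.inr '' {j : Fin n2 | (j : ℕ) < k})
                ({Sum.inr ⟨k, hk⟩} : Set (Fin n1 ⊕ Fin n2)) := by
              rw [Set.disjoint_singleton_right]
              rintro (⟨i, hi⟩ | ⟨j, hj, hj'⟩)
              · exact Sum.inl_ne_inr hi
              · rw [Sum.inr.injEq] at hj'
                subst hj'
                exact lt_irrefl k hj
            have h1 : Indep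
                (⨆ i ∈ (Set.range Sum.inl ∪ Sum.inr '' {j : Fin n2 | (j : ℕ) < k}),
                  MeasurableSpace.comap (Sum.elim W V i) inferInstance)
                (MeasurableSpace.comap (Sum.elim W V (Sum.inr ⟨k, hk⟩)) inferInstance) μ := by
              have h2 := indep_iSup_of_disjoint (fun i => (hmeasWV i).comap_le) h0 hdisj
              simpa using h2
            exact h1
          exact step_bound ℓ hℓmeas θstar ω μ D hSCCω h𝔪le _ hX ih _ hT𝔪 _
            (hmeasWV (Sum.inr ⟨k, hk⟩)) (hiidWV (Sum.inr ⟨k, hk⟩)) hind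
        · -- nothing new: the filter is unchanged
          have : Finset.univ.filter (fun j : Fin n2 => (j : ℕ) < k + 1) =
              Finset.univ.filter (fun j : Fin n2 => (j : ℕ) < k) := by
            ext j
            simp only [Finset.mem_filter, Finset.mem_univ, true_and]
            have := j.2
            omega
          rw [this]
          exact ih
    have hfull : Finset.univ.filter (fun j : Fin n2 => (j : ℕ) < n2) = Finset.univ := by
      ext j; simp [j.2]
    have hprod : ∀ x, ENNReal.ofReal (GUeOff ℓ ω V θhatS1 θstar x) = ∏ j : Fin n2,
        ENNReal.ofReal (Real.exp (-ω * (ℓ (θhatS1 x) (V j x) - ℓ θstar (V j x)))) := by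
      intro x
      rw [GUeOff, Finset.mul_sum, Real.exp_sum]
      exact ENNReal.ofReal_prod_of_nonneg fun i _ => (Real.exp_pos _).le
    have hGmeas : Measurable (GUeOff ℓ ω V θhatS1 θstar) := by
      apply Real.measurable_exp.comp
      apply Measurable.const_mul
      refine Finset.measurable_sum _ fun j _ => ?_
      exact (hℓmeas.comp (hθS1M.prodMk (hmeasWV (Sum.inr j)))).sub
        (hℓmeas.comp (measurable_const.prodMk (hmeasWV (Sum.inr j))))
    refine coverage_of_evalue μ _ hGmeas (fun x => (Real.exp_pos _).le) ?_ α hα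
    calc ∫⁻ x, ENNReal.ofReal (GUeOff ℓ ω V θhatS1 θstar x) ∂μ
        = ∫⁻ x, ∏ j : Fin n2,
            ENNReal.ofReal (Real.exp (-ω * (ℓ (θhatS1 x) (V j x) - ℓ θstar (V j x)))) ∂μ :=
          lintegral_congr hprod
      _ ≤ 1 := by
          have h := hint n2
          rw [hfull] at h
          exact h

end
end

section
/- Suppose the strong central condition holds with learning rate ω̄ and take a fixed ω ∈ [0, ω̄), and fix α ∈ (0,1). Then the tests and confidence sets based on the online GUe-value are anytime-valid: for any stopping time τ (almost surely finite) with respect to the natural filtration of (Z_i), for every Θ_0 ⊆ Θ containing θ* one has Pr{ inf_{θ∈Θ_0} G_{τ,on}(θ) ≥ α^{−1} } ≤ α, and Pr{ θ* ∈ C_α(Z^τ) } ≥ 1 − α, where C_α(Z^τ) = { θ ∈ Θ : G_{τ,on}(θ) < α^{−1} }. -/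
open MeasureTheory ProbabilityTheory Filter

noncomputable section

lemma GUeOn_nonneg {Ω 𝕫 Θ : Type*} (ℓ : Θ → 𝕫 → ℝ) (ω : ℝ) (Z : ℕ → Ω → 𝕫)
    (θhat : ℕ → Ω → Θ) (θ : Θ) (n : ℕ) (x : Ω) : 0 ≤ GUeOn ℓ ω Z θhat θ n x :=
  (Real.exp_pos _).le

lemma GUeOn_succ {Ω 𝕫 Θ : Type*} (ℓ : Θ → 𝕫 → ℝ) (ω : ℝ) (Z : ℕ → Ω → 𝕫)
    (θhat : ℕ → Ω → Θ) (θ : Θ) (n : ℕ) (x : Ω) :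
    GUeOn ℓ ω Z θhat θ (n + 1) x
      = GUeOn ℓ ω Z θhat θ n x
          * Real.exp (-ω * (ℓ (θhat n x) (Z n x) - ℓ θ (Z n x))) := by
  rw [GUeOn, GUeOn, ← Real.exp_add]
  congr 1
  rw [Finset.sum_range_succ]
  ring

set_option maxHeartbeats 1000000 in
lemma measurable_apply_nat {Ω : Type*} [MeasurableSpace Ω] {G : ℕ → Ω → ℝ}
    (hGm : ∀ n, Measurable (G n)) {σ : Ω → ℕ} (hσ : Measurable σ) :
    Measurable fun x => G (σ x) x := by
  have huncurry : Measurable (fun p : Ω × ℕ => G p.2 p.1) :=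
    measurable_from_prod_countable_left fun k => hGm k
  exact huncurry.comp (measurable_id.prodMk hσ)

/-- Under the strong central condition with learning rate `ω̄` and any fixed `ω ∈ [0, ω̄)`,
the online GUe tests and confidence sets are anytime-valid: for any stopping time `τ` w.r.t.
the natural filtration of `(Z_i)`, for any `Θ₀ ∋ θ*`,
`Pr{inf_{θ∈Θ₀} G_{τ,on}(θ) ≥ α⁻¹} ≤ α` and `Pr{θ* ∈ C_α(Z^τ)} ≥ 1 - α`. -/
theorem online_GUe_anytime_valid
    {Ω 𝕫 Θ : Type*} [MeasurableSpace Ω] [MeasurableSpace 𝕫] [MeasurableSpace Θ]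
    (μ : Measure Ω) [IsProbabilityMeasure μ]
    (D : Measure 𝕫) [IsProbabilityMeasure D]
    (ℓ : Θ → 𝕫 → ℝ) (hℓnn : ∀ θ z, 0 ≤ ℓ θ z)
    (hℓmeas : Measurable (Function.uncurry ℓ))
    (Z : ℕ → Ω → 𝕫) (hZmeas : ∀ i, Measurable (Z i))
    (hindep : iIndepFun Z μ)
    (hiid : ∀ i, μ.map (Z i) = D)
    (θstar : Θ)
    (hmin : ∀ θ : Θ, ∫⁻ z, ENNReal.ofReal (ℓ θstar z) ∂D ≤ ∫⁻ z, ENNReal.ofReal (ℓ θ z) ∂D)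
    (θhat : ℕ → Ω → Θ) (θ0 : Θ) (hθ0 : θhat 0 = fun _ => θ0)
    (hθhat : ∀ k, Measurable[natFiltration Z hZmeas k] (θhat k))
    (ωbar : ℝ) (hωbar : 0 < ωbar)
    (hSCC : ∀ θ : Θ, ∀ ω' ∈ Set.Ico (0 : ℝ) ωbar,
      ∫⁻ z, ENNReal.ofReal (Real.exp (-ω' * (ℓ θ z - ℓ θstar z))) ∂D ≤ 1)
    (ω : ℝ) (hω : ω ∈ Set.Ico (0 : ℝ) ωbar)
    (α : ℝ) (hα : α ∈ Set.Ioo (0 : ℝ) 1)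
    (τ : Ω → ℕ) (hτ : IsStoppingTime (natFiltration Z hZmeas) (fun x => (τ x : WithTop ℕ))) :
    (∀ Θ0 : Set Θ, θstar ∈ Θ0 →
      μ {x | α⁻¹ ≤ ⨅ θ : Θ0, GUeOn ℓ ω Z θhat (θ : Θ) (τ x) x} ≤ ENNReal.ofReal α) ∧
    ENNReal.ofReal (1 - α) ≤ μ {x | GUeOn ℓ ω Z θhat θstar (τ x) x < α⁻¹} := by
  obtain ⟨hα0, hα1⟩ := hα
  set ℱ := natFiltration Z hZmeas with hℱdef
  -- measurability of `Z i` and `θhat i` w.r.t. `ℱ n` for `i < n`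
  have hZF : ∀ {i n : ℕ}, i < n → Measurable[ℱ n] (Z i) := by
    intro i n hin
    have hle : MeasurableSpace.comap (Z i) inferInstance ≤ ℱ n :=
      le_biSup (fun j => MeasurableSpace.comap (Z j) inferInstance) hin
    exact fun t ht => hle _ ⟨t, ht, rfl⟩
  have hθF : ∀ {i n : ℕ}, i < n → Measurable[ℱ n] (θhat i) := by
    intro i n hin
    exact (hθhat i).mono (ℱ.mono hin.le) le_rfl
  -- measurability of `GUeOn θstar n` w.r.t. `ℱ n`
  have hGF : ∀ n, Measurable[ℱ n] (fun x => GUeOn ℓ ω Z θhat θstar n x) := by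
    intro n
    have hsum : Measurable[ℱ n] fun x =>
        ∑ i ∈ Finset.range n, (ℓ (θhat i x) (Z i x) - ℓ θstar (Z i x)) := by
      refine Finset.measurable_sum _ fun i hi => ?_
      have hin : i < n := Finset.mem_range.mp hi
      exact (hℓmeas.comp ((hθF hin).prodMk (hZF hin))).sub
        (hℓmeas.comp (measurable_const.prodMk (hZF hin)))
    exact Real.measurable_exp.comp (hsum.const_mul (-ω))
  have hGm : ∀ n, Measurable (fun x => GUeOn ℓ ω Z θhat θstar n x) :=
    fun n => (hGF n).mono (ℱ.le n) le_rfl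
  have hτmeas : Measurable τ := by
    refine measurable_to_countable fun y => ?_
    convert ℱ.le (τ y) _ (hτ.measurableSet_eq (τ y)) using 1
    ext x; simp
  have hGτmin : ∀ n, Measurable (fun x => GUeOn ℓ ω Z θhat θstar (min (τ x) n) x) :=
    fun n => measurable_apply_nat hGm (hτmeas.min measurable_const)
  have hGτ : Measurable (fun x => GUeOn ℓ ω Z θhat θstar (τ x) x) :=
    measurable_apply_nat hGm hτmeas
  -- key supermartingale-type bound for the stopped process
  have hkey : ∀ n, ∫⁻ x, ENNReal.ofReal (GUeOn ℓ ω Z θhat θstar (min (τ x) n) x) ∂μ ≤ 1 := by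
    intro n
    induction n with
    | zero =>
      simp [GUeOn]
    | succ n ih =>
      set B : Set Ω := {x | τ x ≤ n} with hBdef
      have hBn : MeasurableSet[ℱ n] B := by
        convert hτ n using 1
        ext x; simp [hBdef]
      have hB : MeasurableSet B := ℱ.le n _ hBn
      -- independence of `ℱ n` and `Z n`
      have hIndepσ : Indep (ℱ n) (MeasurableSpace.comap (Z n) inferInstance) μ := by
        have h1 : Indep (⨆ i ∈ Set.Iio n, MeasurableSpace.comap (Z i) inferInstance)
            (⨆ i ∈ (Set.Iio n)ᶜ, MeasurableSpace.comap (Z i) inferInstance) μ :=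
          indep_biSup_compl (fun i => (hZmeas i).comap_le) hindep (Set.Iio n)
        exact indep_of_indep_of_le_right h1
          (le_biSup (fun j => MeasurableSpace.comap (Z j) inferInstance)
            (by simp : n ∈ (Set.Iio n)ᶜ))
      -- the frozen variable
      set W : Ω → ℝ × Θ :=
        fun x => (Bᶜ.indicator (fun y => GUeOn ℓ ω Z θhat θstar n y) x, θhat n x) with hWdef
      have hWF : Measurable[ℱ n] W :=
        (Measurable.indicator (hGF n) hBn.compl).prodMk (hθhat n)
      have hW : Measurable W := hWF.mono (ℱ.le n) le_rfl
      have hIndep : IndepFun W (Z n) μ :=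
        indep_of_indep_of_le_left hIndepσ hWF.comap_le
      have hmap : μ.map (fun x => (W x, Z n x)) = (μ.map W).prod D := by
        rw [← hiid n]
        exact (indepFun_iff_map_prod_eq_prod_map_map hW.aemeasurable
          (hZmeas n).aemeasurable).mp hIndep
      set g : (ℝ × Θ) × 𝕫 → ENNReal :=
        fun p => ENNReal.ofReal p.1.1
          * ENNReal.ofReal (Real.exp (-ω * (ℓ p.1.2 p.2 - ℓ θstar p.2))) with hgdef
      have hg : Measurable g := by
        refine (ENNReal.measurable_ofReal.comp (measurable_fst.comp measurable_fst)).mul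
          (ENNReal.measurable_ofReal.comp (Real.measurable_exp.comp ?_))
        exact ((hℓmeas.comp ((measurable_snd.comp measurable_fst).prodMk measurable_snd)).sub
          (hℓmeas.comp (measurable_const.prodMk measurable_snd))).const_mul (-ω)
      have hstep : ∫⁻ x in Bᶜ,
          ENNReal.ofReal (GUeOn ℓ ω Z θhat θstar (min (τ x) (n + 1)) x) ∂μ
          ≤ ∫⁻ x in Bᶜ, ENNReal.ofReal (GUeOn ℓ ω Z θhat θstar (min (τ x) n) x) ∂μ := by
        have h1 : ∫⁻ x in Bᶜ,
            ENNReal.ofReal (GUeOn ℓ ω Z θhat θstar (min (τ x) (n + 1)) x) ∂μ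
            = ∫⁻ x, g (W x, Z n x) ∂μ := by
          rw [← lintegral_indicator hB.compl]
          refine lintegral_congr fun x => ?_
          by_cases hx : x ∈ Bᶜ
          · have hτx : ¬ τ x ≤ n := hx
            have hmin1 : min (τ x) (n + 1) = n + 1 := by omega
            rw [Set.indicator_of_mem hx]
            simp only [hgdef, hWdef, Set.indicator_of_mem hx]
            rw [hmin1, GUeOn_succ,
              ENNReal.ofReal_mul (GUeOn_nonneg ℓ ω Z θhat θstar n x)]
          · rw [Set.indicator_of_notMem hx]
            simp [hgdef, hWdef, Set.indicator_of_notMem hx]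
        have h2 : ∫⁻ x, g (W x, Z n x) ∂μ = ∫⁻ p, g p ∂((μ.map W).prod D) := by
          rw [← hmap]
          exact (lintegral_map hg (hW.prodMk (hZmeas n))).symm
        have h3 : ∫⁻ p, g p ∂((μ.map W).prod D)
            = ∫⁻ w, ∫⁻ z, g (w, z) ∂D ∂(μ.map W) :=
          lintegral_prod g hg.aemeasurable
        have h4 : ∀ w : ℝ × Θ, ∫⁻ z, g (w, z) ∂D ≤ ENNReal.ofReal w.1 := by
          intro w
          have hmeas : Measurable fun z =>
              ENNReal.ofReal (Real.exp (-ω * (ℓ w.2 z - ℓ θstar z))) := by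
            refine ENNReal.measurable_ofReal.comp (Real.measurable_exp.comp ?_)
            exact ((hℓmeas.comp (measurable_const.prodMk measurable_id)).sub
              (hℓmeas.comp (measurable_const.prodMk measurable_id))).const_mul (-ω)
          simp only [hgdef]
          calc ∫⁻ z, ENNReal.ofReal w.1
                * ENNReal.ofReal (Real.exp (-ω * (ℓ w.2 z - ℓ θstar z))) ∂D
              = ENNReal.ofReal w.1
                * ∫⁻ z, ENNReal.ofReal (Real.exp (-ω * (ℓ w.2 z - ℓ θstar z))) ∂D :=
              lintegral_const_mul _ hmeas
            _ ≤ ENNReal.ofReal w.1 * 1 := mul_le_mul_right (hSCC w.2 ω hω) _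
            _ = ENNReal.ofReal w.1 := mul_one _
        have h5 : ∫⁻ w, ENNReal.ofReal w.1 ∂(μ.map W)
            = ∫⁻ x, ENNReal.ofReal ((W x).1) ∂μ :=
          lintegral_map (ENNReal.measurable_ofReal.comp measurable_fst) hW
        have h6 : ∫⁻ x, ENNReal.ofReal ((W x).1) ∂μ
            = ∫⁻ x in Bᶜ, ENNReal.ofReal (GUeOn ℓ ω Z θhat θstar n x) ∂μ := by
          rw [← lintegral_indicator hB.compl]
          refine lintegral_congr fun x => ?_
          by_cases hx : x ∈ Bᶜ
          · simp [hWdef, Set.indicator_of_mem hx]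
          · simp [hWdef, Set.indicator_of_notMem hx]
        have h7 : ∫⁻ x in Bᶜ, ENNReal.ofReal (GUeOn ℓ ω Z θhat θstar n x) ∂μ
            = ∫⁻ x in Bᶜ, ENNReal.ofReal (GUeOn ℓ ω Z θhat θstar (min (τ x) n) x) ∂μ := by
          refine setLIntegral_congr_fun_ae hB.compl (ae_of_all _ fun x hx => ?_)
          have hτx : ¬ τ x ≤ n := hx
          have : min (τ x) n = n := by omega
          rw [this]
        calc ∫⁻ x in Bᶜ,
            ENNReal.ofReal (GUeOn ℓ ω Z θhat θstar (min (τ x) (n + 1)) x) ∂μ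
            = ∫⁻ w, ∫⁻ z, g (w, z) ∂D ∂(μ.map W) := by rw [h1, h2, h3]
          _ ≤ ∫⁻ w, ENNReal.ofReal w.1 ∂(μ.map W) := lintegral_mono h4
          _ = ∫⁻ x in Bᶜ, ENNReal.ofReal (GUeOn ℓ ω Z θhat θstar (min (τ x) n) x) ∂μ := by
              rw [h5, h6, h7]
      have hBeq : ∫⁻ x in B,
          ENNReal.ofReal (GUeOn ℓ ω Z θhat θstar (min (τ x) (n + 1)) x) ∂μ
          = ∫⁻ x in B, ENNReal.ofReal (GUeOn ℓ ω Z θhat θstar (min (τ x) n) x) ∂μ := by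
        refine setLIntegral_congr_fun_ae hB (ae_of_all _ fun x hx => ?_)
        have hτx : τ x ≤ n := hx
        have : min (τ x) (n + 1) = min (τ x) n := by omega
        rw [this]
      calc ∫⁻ x, ENNReal.ofReal (GUeOn ℓ ω Z θhat θstar (min (τ x) (n + 1)) x) ∂μ
          = ∫⁻ x in B, ENNReal.ofReal (GUeOn ℓ ω Z θhat θstar (min (τ x) (n + 1)) x) ∂μ
            + ∫⁻ x in Bᶜ,
              ENNReal.ofReal (GUeOn ℓ ω Z θhat θstar (min (τ x) (n + 1)) x) ∂μ :=
          (lintegral_add_compl _ hB).symm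
        _ ≤ ∫⁻ x in B, ENNReal.ofReal (GUeOn ℓ ω Z θhat θstar (min (τ x) n) x) ∂μ
            + ∫⁻ x in Bᶜ, ENNReal.ofReal (GUeOn ℓ ω Z θhat θstar (min (τ x) n) x) ∂μ := by
          rw [hBeq]; exact add_le_add le_rfl hstep
        _ = ∫⁻ x, ENNReal.ofReal (GUeOn ℓ ω Z θhat θstar (min (τ x) n) x) ∂μ :=
          lintegral_add_compl _ hB
        _ ≤ 1 := ih
  -- pass to the stopping time via Fatou
  have htau : ∫⁻ x, ENNReal.ofReal (GUeOn ℓ ω Z θhat θstar (τ x) x) ∂μ ≤ 1 := by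
    have hlim : ∀ x, ENNReal.ofReal (GUeOn ℓ ω Z θhat θstar (τ x) x)
        = liminf (fun n => ENNReal.ofReal (GUeOn ℓ ω Z θhat θstar (min (τ x) n) x)) atTop := by
      intro x
      have hconst : ∀ n ≥ τ x,
          ENNReal.ofReal (GUeOn ℓ ω Z θhat θstar (min (τ x) n) x)
            = ENNReal.ofReal (GUeOn ℓ ω Z θhat θstar (τ x) x) := by
        intro n hn
        rw [min_eq_left hn]
      have htend : Tendsto (fun n => ENNReal.ofReal (GUeOn ℓ ω Z θhat θstar (min (τ x) n) x))
          atTop (nhds (ENNReal.ofReal (GUeOn ℓ ω Z θhat θstar (τ x) x))) := by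
        refine tendsto_atTop_of_eventually_const (i₀ := τ x) hconst
      exact htend.liminf_eq.symm
    calc ∫⁻ x, ENNReal.ofReal (GUeOn ℓ ω Z θhat θstar (τ x) x) ∂μ
        = ∫⁻ x, liminf (fun n =>
            ENNReal.ofReal (GUeOn ℓ ω Z θhat θstar (min (τ x) n) x)) atTop ∂μ :=
        lintegral_congr hlim
      _ ≤ liminf (fun n =>
            ∫⁻ x, ENNReal.ofReal (GUeOn ℓ ω Z θhat θstar (min (τ x) n) x) ∂μ) atTop :=
        lintegral_liminf_le fun n => ENNReal.measurable_ofReal.comp (hGτmin n)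
      _ ≤ liminf (fun _ : ℕ => (1 : ENNReal)) atTop :=
        liminf_le_liminf (Eventually.of_forall fun n => hkey n)
      _ = 1 := liminf_const 1
  -- Markov / Ville inequality
  have hMarkov : μ {x | α⁻¹ ≤ GUeOn ℓ ω Z θhat θstar (τ x) x} ≤ ENNReal.ofReal α := by
    have hset : {x | α⁻¹ ≤ GUeOn ℓ ω Z θhat θstar (τ x) x}
        = {x | ENNReal.ofReal α⁻¹ ≤ ENNReal.ofReal (GUeOn ℓ ω Z θhat θstar (τ x) x)} := by
      ext x
      simp [ENNReal.ofReal_le_ofReal_iff (GUeOn_nonneg ℓ ω Z θhat θstar (τ x) x)]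
    have hmul := mul_meas_ge_le_lintegral₀ (μ := μ)
      (f := fun x => ENNReal.ofReal (GUeOn ℓ ω Z θhat θstar (τ x) x))
      (ENNReal.measurable_ofReal.comp hGτ).aemeasurable (ENNReal.ofReal α⁻¹)
    have hmul1 : ENNReal.ofReal α⁻¹
        * μ {x | α⁻¹ ≤ GUeOn ℓ ω Z θhat θstar (τ x) x} ≤ 1 := by
      rw [hset]; exact hmul.trans htau
    have hne : ENNReal.ofReal α⁻¹ ≠ 0 := by
      simp [ENNReal.ofReal_eq_zero, not_le, inv_pos, hα0]
    have hnetop : ENNReal.ofReal α⁻¹ ≠ ⊤ := ENNReal.ofReal_ne_top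
    have := mul_le_mul_right hmul1 (ENNReal.ofReal α⁻¹)⁻¹
    rw [← mul_assoc, ENNReal.inv_mul_cancel hne hnetop, one_mul, mul_one] at this
    calc μ {x | α⁻¹ ≤ GUeOn ℓ ω Z θhat θstar (τ x) x} ≤ (ENNReal.ofReal α⁻¹)⁻¹ := this
      _ = ENNReal.ofReal α := by
        rw [ENNReal.ofReal_inv_of_pos hα0, inv_inv]
  constructor
  · intro Θ0 hθmem
    have hsub : {x | α⁻¹ ≤ ⨅ θ : Θ0, GUeOn ℓ ω Z θhat (θ : Θ) (τ x) x}
        ⊆ {x | α⁻¹ ≤ GUeOn ℓ ω Z θhat θstar (τ x) x} := by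
      intro x hx
      have hbdd : BddBelow (Set.range fun θ : Θ0 => GUeOn ℓ ω Z θhat (θ : Θ) (τ x) x) := by
        refine ⟨0, ?_⟩
        rintro y ⟨θ, rfl⟩
        exact GUeOn_nonneg ℓ ω Z θhat _ (τ x) x
      exact le_trans hx (ciInf_le hbdd ⟨θstar, hθmem⟩)
    exact le_trans (measure_mono hsub) hMarkov
  · have hSmeas : MeasurableSet {x | α⁻¹ ≤ GUeOn ℓ ω Z θhat θstar (τ x) x} :=
      measurableSet_le measurable_const hGτ
    have hcompl : {x | GUeOn ℓ ω Z θhat θstar (τ x) x < α⁻¹}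
        = {x | α⁻¹ ≤ GUeOn ℓ ω Z θhat θstar (τ x) x}ᶜ := by
      ext x; simp [not_le]
    rw [hcompl, prob_compl_eq_one_sub hSmeas]
    calc ENNReal.ofReal (1 - α) = 1 - ENNReal.ofReal α := by
          rw [ENNReal.ofReal_sub 1 hα0.le, ENNReal.ofReal_one]
      _ ≤ 1 - μ {x | α⁻¹ ≤ GUeOn ℓ ω Z θhat θstar (τ x) x} :=
        tsub_le_tsub_left hMarkov 1

end
end

section
/- Let z_1, …, z_n ∈ 𝕫, and for each k ∈ {1,…,n} let θ̂_k be an (ε, δ)-almost empirical risk minimizer for (z_1,…,z_k), i.e., k^{−1}∑_{i=1}^k ℓ(θ̂_k, z_i) ≤ inf_{θ∈Θ} k^{−1}∑_{i=1}^k ℓ(θ, z_i) + δ/k^{1+ε}. Suppose 0 ≤ ω̂_k ≤ Ω̄ for all k ∈ {0,1,…,n−1}. Then ∑_{i=1}^n ω̂_{i−1} ℓ(θ̂_i, z_i) ≤ Ω̄ [ H_n^{(ε)} δ + ∑_{i=1}^n ℓ(θ̂_n, z_i) ], where H_n^{(m)} = ∑_{k=1}^n k^{−m} is the generalized harmonic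 number of order m. -/
open Finset

noncomputable section

/-- Lemma: if `θ̂_k` is an `(ε, δ)`-almost empirical risk minimizer for `z_1, …, z_k` for each
`k ∈ {1, …, n}` and the learning rates satisfy `0 ≤ ω̂_k ≤ Ω̄` for `k ∈ {0, …, n-1}`, then
`∑_{i=1}^n ω̂_{i-1} ℓ(θ̂_i, z_i) ≤ Ω̄ (H_n^{(ε)} δ + ∑_{i=1}^n ℓ(θ̂_n, z_i))`, where
`H_n^{(ε)} = ∑_{k=1}^n k^{-ε}` is the generalized harmonic number of order `ε`.
(Here `z i` denotes `z_{i+1}`, while `θhat` and `ωhat` carry the paper's indices.) -/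
theorem aerm_online_offline_domination
    {𝕫 Θ : Type*} [Nonempty Θ]
    (ℓ : Θ → 𝕫 → ℝ) (hℓnn : ∀ θ z, 0 ≤ ℓ θ z)
    (ε δ : ℝ) (hε : 0 ≤ ε) (hδ : 0 ≤ δ)
    (n : ℕ) (z : ℕ → 𝕫) (θhat : ℕ → Θ) (ωhat : ℕ → ℝ) (Ωbar : ℝ)
    -- `θ̂_k` is an `(ε, δ)`-AERM on `z_1, …, z_k` for each `k ∈ {1, …, n}`
    (hAERM : ∀ k ∈ Finset.Icc 1 n,
      (∑ i ∈ Finset.range k, ℓ (θhat k) (z i)) / k ≤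
        (⨅ θ : Θ, (∑ i ∈ Finset.range k, ℓ θ (z i)) / k) + δ / (k : ℝ) ^ (1 + ε))
    -- `0 ≤ ω̂_k ≤ Ω̄` for `k ∈ {0, 1, …, n-1}`
    (hω : ∀ k < n, ωhat k ∈ Set.Icc (0 : ℝ) Ωbar) :
    ∑ i ∈ Finset.range n, ωhat i * ℓ (θhat (i + 1)) (z i) ≤
      Ωbar * ((∑ k ∈ Finset.Icc 1 n, (k : ℝ) ^ (-ε)) * δ +
        ∑ i ∈ Finset.range n, ℓ (θhat n) (z i)) := by
  rcases Nat.eq_zero_or_pos n with hn | hn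
  · subst hn; simp
  have hΩ : 0 ≤ Ωbar := le_trans (hω 0 hn).1 (hω 0 hn).2
  -- key consequence of AERM
  have key : ∀ k, 1 ≤ k → k ≤ n → ∀ θ : Θ,
      (∑ i ∈ Finset.range k, ℓ (θhat k) (z i)) ≤
        (∑ i ∈ Finset.range k, ℓ θ (z i)) + δ * (k : ℝ) ^ (-ε) := by
    intro k hk1 hkn θ
    have hk0 : (0 : ℝ) < k := by exact_mod_cast hk1
    have h := hAERM k (Finset.mem_Icc.mpr ⟨hk1, hkn⟩)
    have hinf : (⨅ θ' : Θ, (∑ i ∈ Finset.range k, ℓ θ' (z i)) / k) ≤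
        (∑ i ∈ Finset.range k, ℓ θ (z i)) / k := by
      apply ciInf_le
      refine ⟨0, ?_⟩
      rintro x ⟨θ', rfl⟩
      exact div_nonneg (Finset.sum_nonneg fun i _ => hℓnn _ _) hk0.le
    have h2 : (∑ i ∈ Finset.range k, ℓ (θhat k) (z i)) / k ≤
        (∑ i ∈ Finset.range k, ℓ θ (z i)) / k + δ / (k : ℝ) ^ (1 + ε) :=
      h.trans (by linarith)
    have h3 := mul_le_mul_of_nonneg_right h2 hk0.le
    have hrw : δ / (k : ℝ) ^ (1 + ε) * k = δ * (k : ℝ) ^ (-ε) := by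
      rw [Real.rpow_add hk0, Real.rpow_one, Real.rpow_neg hk0.le]
      field_simp
    calc (∑ i ∈ Finset.range k, ℓ (θhat k) (z i))
        = (∑ i ∈ Finset.range k, ℓ (θhat k) (z i)) / k * k := by field_simp
      _ ≤ ((∑ i ∈ Finset.range k, ℓ θ (z i)) / k + δ / (k : ℝ) ^ (1 + ε)) * k := h3
      _ = (∑ i ∈ Finset.range k, ℓ θ (z i)) / k * k + δ / (k : ℝ) ^ (1 + ε) * k := by ring
      _ = (∑ i ∈ Finset.range k, ℓ θ (z i)) + δ * (k : ℝ) ^ (-ε) := by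
          rw [hrw]; field_simp
  -- FTL telescoping induction
  have main : ∀ m, m ≤ n →
      ∑ i ∈ Finset.range m, ℓ (θhat (i + 1)) (z i) ≤
        δ * (∑ k ∈ Finset.Icc 1 (m - 1), (k : ℝ) ^ (-ε)) +
          ∑ i ∈ Finset.range m, ℓ (θhat m) (z i) := by
    intro m
    induction m with
    | zero => intro _; simp
    | succ m ih =>
      intro hmn
      have hm' : m ≤ n := Nat.le_of_succ_le hmn
      have ih' := ih hm'
      rw [Finset.sum_range_succ, Finset.sum_range_succ (f := fun i => ℓ (θhat (m + 1)) (z i))]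
      rcases Nat.eq_zero_or_pos m with hm | hm
      · subst hm; simp
      have hstep := key m hm hm' (θhat (m + 1))
      obtain ⟨p, rfl⟩ := Nat.exists_eq_add_of_le hm
      have hT : (∑ k ∈ Finset.Icc 1 (1 + p + 1 - 1), (k : ℝ) ^ (-ε)) =
          (∑ k ∈ Finset.Icc 1 (1 + p - 1), (k : ℝ) ^ (-ε)) + ((1 + p : ℕ) : ℝ) ^ (-ε) := by
        have e1 : 1 + p + 1 - 1 = p + 1 := by omega
        have e2 : 1 + p - 1 = p := by omega
        have e3 : 1 + p = p + 1 := by omega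
        rw [e1, e2, e3, Finset.sum_Icc_succ_top (Nat.succ_le_succ (Nat.zero_le p))]
      rw [hT]
      have hδm : 0 ≤ δ * ((1 + p : ℕ) : ℝ) ^ (-ε) := by positivity
      linarith
  have hS := main n le_rfl
  have hTsub : (∑ k ∈ Finset.Icc 1 (n - 1), (k : ℝ) ^ (-ε)) ≤
      (∑ k ∈ Finset.Icc 1 n, (k : ℝ) ^ (-ε)) := by
    apply Finset.sum_le_sum_of_subset_of_nonneg
    · apply Finset.Icc_subset_Icc_right; omega
    · intro k _ _; positivity
  have hterm : ∑ i ∈ Finset.range n, ωhat i * ℓ (θhat (i + 1)) (z i) ≤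
      Ωbar * ∑ i ∈ Finset.range n, ℓ (θhat (i + 1)) (z i) := by
    rw [Finset.mul_sum]
    apply Finset.sum_le_sum
    intro i hi
    exact mul_le_mul_of_nonneg_right ((hω i (Finset.mem_range.mp hi)).2) (hℓnn _ _)
  calc ∑ i ∈ Finset.range n, ωhat i * ℓ (θhat (i + 1)) (z i)
      ≤ Ωbar * ∑ i ∈ Finset.range n, ℓ (θhat (i + 1)) (z i) := hterm
    _ ≤ Ωbar * (δ * (∑ k ∈ Finset.Icc 1 (n - 1), (k : ℝ) ^ (-ε)) +
          ∑ i ∈ Finset.range n, ℓ (θhat n) (z i)) := mul_le_mul_of_nonneg_left hS hΩ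
    _ ≤ Ωbar * ((∑ k ∈ Finset.Icc 1 n, (k : ℝ) ^ (-ε)) * δ +
          ∑ i ∈ Finset.range n, ℓ (θhat n) (z i)) := by
        apply mul_le_mul_of_nonneg_left _ hΩ
        nlinarith [mul_le_mul_of_nonneg_left hTsub hδ]


end
end

section
/- Let X_1, …, X_{2n} be i.i.d. N(θ*, σ²) with σ² > 0, use the squared-error loss ℓ(θ, x) = (x − θ)², take the training set S_1 = (X_{n+1},…,X_{2n}) with estimator θ̂ equal to the sample mean of S_1, the validation set S_2 = (X_1,…,X_n) with sample mean X̄, and a fixed learning rate ω > 0 in the offline GUe-value. Define b^{(ω)}_{α,σ²}(z) = log(1/α)/(2ωσ²z) + z/2 for z ≠ 0. Then for any α ∈ (0,1), Pr{ G_{n,off}(θ*) ≥ α^{−1} } = ∫_0^∞ ∫_{b^{(ω)}_{α,σ²}(z_2)}^∞ (2π)^{−1} exp(−(z_1² + z_2²)/2) dz_1 dz_2 + ∫_{−∞}^0 ∫_{−∞}^{b^{(ω)}_{α,σ²}(z_2)} (2π)^{−1} exp(−(z_1² + z_2²)/2) dz_1 dz_2. Consequently, any ω > 0 solving the equation in which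 this expression equals α yields a (1−α)-level GUe confidence set with exactly the nominal coverage for θ*. -/
open MeasureTheory ProbabilityTheory Filter

noncomputable section

/-- The boundary function `b^{(ω)}_{α,σ²}(z) = log(1/α)/(2ωσ²z) + z/2`. -/
def gaussBoundary (ω α σ2 z : ℝ) : ℝ :=
  Real.log (1 / α) / (2 * ω * σ2 * z) + z / 2

section Aux
open Real

lemma gaussianPDFReal_conv {p q : NNReal} (hp : p ≠ 0) (hq : q ≠ 0) (z : ℝ) :
    ∫ x, gaussianPDFReal 0 p x * gaussianPDFReal 0 q (z - x) = gaussianPDFReal 0 (p + q) z := by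
  have hp' : (0:ℝ) < p := lt_of_le_of_ne p.coe_nonneg (by exact_mod_cast (Ne.symm hp))
  have hq' : (0:ℝ) < q := lt_of_le_of_ne q.coe_nonneg (by exact_mod_cast (Ne.symm hq))
  have hpq : (0:ℝ) < (p:ℝ) + q := by linarith
  set a : ℝ := p * z / (p + q) with ha
  set b : ℝ := ((p:ℝ) + q) / (2 * p * q) with hb
  have hb' : 0 < b := by positivity
  have hexp : ∀ x : ℝ, (- x^2/(2*(p:ℝ)) + - (z-x)^2/(2*(q:ℝ)))
      = (- z^2/(2*((p:ℝ)+(q:ℝ))) + (-b * (x-a)^2)) := by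
    intro x
    rw [ha, hb]
    field_simp
    ring
  have key : ∀ x : ℝ, gaussianPDFReal 0 p x * gaussianPDFReal 0 q (z - x)
      = ((√(2*π*p))⁻¹ * (√(2*π*q))⁻¹ * rexp (- z^2 / (2*((p:ℝ)+q)))) * rexp (-b * (x - a)^2) := by
    intro x
    simp only [gaussianPDFReal, sub_zero]
    rw [mul_mul_mul_comm, ← Real.exp_add, hexp x, Real.exp_add]
    ring
  simp_rw [key]
  rw [integral_const_mul]
  rw [integral_sub_right_eq_self (fun x => rexp (-b * x^2)) a, integral_gaussian]
  have hsq : √(π / b) = √(2*π*p) * √(2*π*q) / √(2*π*((p:ℝ)+q)) := by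
    rw [← Real.sqrt_mul (by positivity), ← Real.sqrt_div (by positivity)]
    congr 1
    rw [hb]
    field_simp
  rw [hsq, gaussianPDFReal]
  have h1 : √(2*π*(p:ℝ)) ≠ 0 := by positivity
  have h2 : √(2*π*(q:ℝ)) ≠ 0 := by positivity
  have h3 : √(2*π*((p:ℝ)+q)) ≠ 0 := by positivity
  push_cast
  rw [sub_zero]
  field_simp

lemma measurable_pdf2 (v : NNReal) : Measurable (fun p : ℝ × ℝ => gaussianPDF p.1 v p.2) := by
  apply ENNReal.measurable_ofReal.comp
  unfold gaussianPDFReal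
  exact (measurable_const.mul ((((measurable_snd.sub measurable_fst).pow_const 2).neg.div_const _).exp))

lemma indepFun_add_gaussian₀ {Ω : Type*} [MeasurableSpace Ω] {μ : Measure Ω}
    [IsProbabilityMeasure μ] {X Y : Ω → ℝ} (hXm : Measurable X) (hYm : Measurable Y)
    (hXY : IndepFun X Y μ) {v1 v2 : NNReal} (hv1 : v1 ≠ 0) (hv2 : v2 ≠ 0)
    (hX : μ.map X = gaussianReal 0 v1) (hY : μ.map Y = gaussianReal 0 v2) :
    μ.map (fun x => X x + Y x) = gaussianReal 0 (v1 + v2) := by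
  have hv12 : v1 + v2 ≠ 0 := by
    intro h; exact hv1 (add_eq_zero.mp h).1
  have hmap : μ.map (fun x => (X x, Y x)) = (gaussianReal 0 v1).prod (gaussianReal 0 v2) := by
    rw [← hX, ← hY]
    exact (indepFun_iff_map_prod_eq_prod_map_map hXm.aemeasurable hYm.aemeasurable).mp hXY
  have hcomp : (fun x => X x + Y x) = (fun p : ℝ × ℝ => p.1 + p.2) ∘ (fun x => (X x, Y x)) := rfl
  rw [hcomp, ← Measure.map_map measurable_add (hXm.prodMk hYm), hmap]
  ext s hs
  rw [Measure.map_apply measurable_add hs, Measure.prod_apply (measurable_add hs)]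
  have slice : ∀ x : ℝ,
      gaussianReal 0 v2 (Prod.mk x ⁻¹' ((fun p : ℝ × ℝ => p.1 + p.2) ⁻¹' s))
        = ∫⁻ y in s, gaussianPDF x v2 y := by
    intro x
    have h1 : Prod.mk x ⁻¹' ((fun p : ℝ × ℝ => p.1 + p.2) ⁻¹' s) = (fun y => x + y) ⁻¹' s := rfl
    rw [h1, ← Measure.map_apply (measurable_const_add x) hs, gaussianReal_map_const_add,
      zero_add, gaussianReal_apply _ hv2 s]
  simp_rw [slice]
  rw [gaussianReal_of_var_ne_zero _ hv1,
    lintegral_withDensity_eq_lintegral_mul _ (measurable_gaussianPDF _ _)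
      ((measurable_pdf2 v2).lintegral_prod_right')]
  have swap : ∫⁻ x, gaussianPDF 0 v1 x * ∫⁻ y in s, gaussianPDF x v2 y
      = ∫⁻ y in s, ∫⁻ x, gaussianPDF 0 v1 x * gaussianPDF x v2 y := by
    rw [← lintegral_lintegral_swap
      ((((measurable_gaussianPDF 0 v1).comp measurable_fst).mul (measurable_pdf2 v2)).aemeasurable)]
    exact lintegral_congr fun x => (lintegral_const_mul' _ _ ENNReal.ofReal_ne_top).symm
  show ∫⁻ x, gaussianPDF 0 v1 x * ∫⁻ y in s, gaussianPDF x v2 y = gaussianReal 0 (v1 + v2) s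
  rw [swap]
  rw [gaussianReal_apply _ hv12 s]
  apply lintegral_congr
  intro y
  have hpt : ∀ x : ℝ, gaussianPDF 0 v1 x * gaussianPDF x v2 y
      = ENNReal.ofReal (gaussianPDFReal 0 v1 x * gaussianPDFReal 0 v2 (y - x)) := by
    intro x
    rw [gaussianPDF, gaussianPDF, ← ENNReal.ofReal_mul (gaussianPDFReal_nonneg _ _ _)]
    congr 2
    rw [gaussianPDFReal_sub, zero_add]
  simp_rw [hpt]
  rw [← ofReal_integral_eq_lintegral_ofReal, gaussianPDFReal_conv hv1 hv2 y, gaussianPDF]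
  · have hbd : Integrable (gaussianPDFReal 0 v1) := integrable_gaussianPDFReal 0 v1
    have hC : ∃ C, ∀ x, ‖gaussianPDFReal 0 v2 (y - x)‖ ≤ C := by
      refine ⟨(√(2*π*v2))⁻¹, fun x => ?_⟩
      rw [norm_of_nonneg (gaussianPDFReal_nonneg _ _ _), gaussianPDFReal]
      have h1 : rexp (-(y - x - 0)^2/(2*(v2:ℝ))) ≤ 1 := by
        apply Real.exp_le_one_iff.mpr
        have h2 : (0:ℝ) < 2 * v2 := by
          have := hv2
          positivity
        exact div_nonpos_of_nonpos_of_nonneg (neg_nonpos_of_nonneg (sq_nonneg _)) h2.le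
      calc (√(2*π*(v2:ℝ)))⁻¹ * rexp (-(y - x - 0)^2/(2*(v2:ℝ))) ≤ (√(2*π*(v2:ℝ)))⁻¹ * 1 :=
            mul_le_mul_of_nonneg_left h1 (by positivity)
        _ = (√(2*π*(v2:ℝ)))⁻¹ := mul_one _
    have hmul := hbd.bdd_mul
      (((measurable_gaussianPDFReal 0 v2).comp (measurable_const.sub measurable_id)).aestronglyMeasurable)
      (ae_of_all _ hC.choose_spec)
    exact hmul.congr (Filter.Eventually.of_forall fun x => mul_comm _ _)
  · exact Filter.Eventually.of_forall fun x =>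
      mul_nonneg (gaussianPDFReal_nonneg _ _ _) (gaussianPDFReal_nonneg _ _ _)

lemma map_center {Ω : Type*} [MeasurableSpace Ω] {μ : Measure Ω} {X : Ω → ℝ}
    (hXm : Measurable X) {m : ℝ} {v : NNReal} (hX : μ.map X = gaussianReal m v) :
    μ.map (fun x => X x - m) = gaussianReal 0 v := by
  have h : (fun x => X x - m) = (fun y => y + (-m)) ∘ X := by
    funext x; simp [sub_eq_add_neg]
  rw [h, ← Measure.map_map (measurable_add_const _) hXm, hX, gaussianReal_map_add_const]
  norm_num

lemma indepFun_add_gaussian {Ω : Type*} [MeasurableSpace Ω] {μ : Measure Ω}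
    [IsProbabilityMeasure μ] {X Y : Ω → ℝ} (hXm : Measurable X) (hYm : Measurable Y)
    (hXY : IndepFun X Y μ) {m1 m2 : ℝ} {v1 v2 : NNReal} (hv1 : v1 ≠ 0) (hv2 : v2 ≠ 0)
    (hX : μ.map X = gaussianReal m1 v1) (hY : μ.map Y = gaussianReal m2 v2) :
    μ.map (fun x => X x + Y x) = gaussianReal (m1 + m2) (v1 + v2) := by
  have hXY0 : IndepFun (fun x => X x - m1) (fun x => Y x - m2) μ :=
    hXY.comp (measurable_id.sub_const m1) (measurable_id.sub_const m2)
  have h0 := indepFun_add_gaussian₀ (hXm.sub_const m1) (hYm.sub_const m2) hXY0 hv1 hv2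
    (map_center hXm hX) (map_center hYm hY)
  have h : (fun x => X x + Y x) = (fun y => y + (m1 + m2)) ∘ (fun x => (X x - m1) + (Y x - m2)) := by
    funext x; simp; ring
  rw [h, ← Measure.map_map (measurable_add_const _) (show Measurable (fun x => (X x - m1) + (Y x - m2)) from (hXm.sub_const m1).add (hYm.sub_const m2)),
    h0, gaussianReal_map_add_const, zero_add]

lemma map_sum_gaussian {Ω : Type*} [MeasurableSpace Ω] {μ : Measure Ω} [IsProbabilityMeasure μ]
    {X : ℕ → Ω → ℝ} (hXmeas : ∀ i, Measurable (X i))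
    (hindep : iIndepFun X μ) {m : ℝ} {v : NNReal} (hv : v ≠ 0)
    (hiid : ∀ i, μ.map (X i) = gaussianReal m v) (s : Finset ℕ) (hs : s.Nonempty) :
    μ.map (fun x => ∑ i ∈ s, X i x) = gaussianReal (s.card * m) (s.card * v) := by
  induction hs using Finset.Nonempty.cons_induction with
  | singleton i => simpa using hiid i
  | cons a s ha hne ih =>
    have hInd : IndepFun (X a) (fun x => ∑ i ∈ s, X i x) μ := by
      have h := (hindep.indepFun_finsetSum_of_notMem hXmeas ha).symm
      have he : (∑ j ∈ s, X j) = fun x => ∑ i ∈ s, X i x := by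
        funext x; simp [Finset.sum_apply]
      rwa [he] at h
    have hcard : s.card ≠ 0 := Finset.card_ne_zero_of_mem hne.choose_spec
    have hvs : (s.card : NNReal) * v ≠ 0 := by
      simp [hcard, hv]
    have hadd := indepFun_add_gaussian (hXmeas a)
      (by exact Finset.measurable_sum s (fun i _ => hXmeas i)) hInd hv hvs (hiid a) ih
    have h : (fun x => ∑ i ∈ Finset.cons a s ha, X i x) = fun x => X a x + ∑ i ∈ s, X i x := by
      funext x; rw [Finset.sum_cons]
    rw [h, hadd, Finset.card_cons]
    congr 1
    · push_cast; ring
    · push_cast; ring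

lemma prod_pdf_eq (z v : ℝ) :
    gaussianPDFReal 0 1 z * gaussianPDFReal 0 1 v = (2*π)⁻¹ * rexp (-(z^2+v^2)/2) := by
  simp only [gaussianPDFReal, sub_zero, NNReal.coe_one, mul_one]
  rw [mul_mul_mul_comm, ← Real.exp_add, ← mul_inv, Real.mul_self_sqrt (by positivity)]
  congr 1
  ring

lemma region_measure (b : ℝ → ℝ) (hb : Measurable b) :
    (gaussianReal 0 1).prod (gaussianReal 0 1)
      {p : ℝ × ℝ | (0 < p.1 ∧ b p.1 ≤ p.2) ∨ (p.1 < 0 ∧ p.2 ≤ b p.1)}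
    = ENNReal.ofReal
        ((∫ z2 in Set.Ioi (0:ℝ), ∫ z1 in Set.Ioi (b z2), (2*π)⁻¹ * rexp (-(z1^2+z2^2)/2)) +
         ∫ z2 in Set.Iio (0:ℝ), ∫ z1 in Set.Iio (b z2), (2*π)⁻¹ * rexp (-(z1^2+z2^2)/2)) := by
  set γ := gaussianReal 0 1 with hγ
  set Sp : Set (ℝ×ℝ) := {p | 0 < p.1 ∧ b p.1 ≤ p.2} with hSpdef
  set Sm : Set (ℝ×ℝ) := {p | p.1 < 0 ∧ p.2 ≤ b p.1} with hSmdef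
  have hmSp : MeasurableSet Sp :=
    (measurableSet_lt measurable_const measurable_fst).inter
      (measurableSet_le (hb.comp measurable_fst) measurable_snd)
  have hmSm : MeasurableSet Sm :=
    (measurableSet_lt measurable_fst measurable_const).inter
      (measurableSet_le measurable_snd (hb.comp measurable_fst))
  have hunion : {p : ℝ × ℝ | (0 < p.1 ∧ b p.1 ≤ p.2) ∨ (p.1 < 0 ∧ p.2 ≤ b p.1)} = Sp ∪ Sm := rfl
  have hdisj : Disjoint Sp Sm := by
    rw [Set.disjoint_left]
    rintro p ⟨h1, -⟩ ⟨h2, -⟩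
    exact absurd (h1.trans h2) (lt_irrefl 0)
  -- the G functions
  set G : ℝ → ℝ := fun t => ∫ z in Set.Ici t, gaussianPDFReal 0 1 z with hGdef
  set H : ℝ → ℝ := fun t => ∫ z in Set.Iic t, gaussianPDFReal 0 1 z with hHdef
  have hGanti : Antitone G := by
    intro t t' h
    exact setIntegral_mono_set (integrable_gaussianPDFReal 0 1).integrableOn
      (ae_of_all _ (gaussianPDFReal_nonneg 0 1))
      (HasSubset.Subset.eventuallyLE (Set.Ici_subset_Ici.2 h))
  have hHmono : Monotone H := by
    intro t t' h
    exact setIntegral_mono_set (integrable_gaussianPDFReal 0 1).integrableOn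
      (ae_of_all _ (gaussianPDFReal_nonneg 0 1))
      (HasSubset.Subset.eventuallyLE (Set.Iic_subset_Iic.2 h))
  have hG0 : ∀ t, 0 ≤ G t := fun t =>
    setIntegral_nonneg measurableSet_Ici (fun z _ => gaussianPDFReal_nonneg 0 1 z)
  have hH0 : ∀ t, 0 ≤ H t := fun t =>
    setIntegral_nonneg measurableSet_Iic (fun z _ => gaussianPDFReal_nonneg 0 1 z)
  have hG1 : ∀ t, G t ≤ 1 := by
    intro t
    have := setIntegral_le_integral (integrable_gaussianPDFReal 0 1)
      (ae_of_all _ (gaussianPDFReal_nonneg 0 1)) (s := Set.Ici t)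
    rwa [integral_gaussianPDFReal_eq_one 0 one_ne_zero] at this
  have hH1 : ∀ t, H t ≤ 1 := by
    intro t
    have := setIntegral_le_integral (integrable_gaussianPDFReal 0 1)
      (ae_of_all _ (gaussianPDFReal_nonneg 0 1)) (s := Set.Iic t)
    rwa [integral_gaussianPDFReal_eq_one 0 one_ne_zero] at this
  -- measure of the positive part
  have pdfnn : ∀ v : ℝ, 0 ≤ gaussianPDFReal 0 1 v := gaussianPDFReal_nonneg 0 1
  have hintG : IntegrableOn (fun v => gaussianPDFReal 0 1 v * G (b v)) (Set.Ioi 0) volume := by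
    apply Integrable.mono ((integrable_gaussianPDFReal 0 1).restrict)
    · exact ((measurable_gaussianPDFReal 0 1).mul (hGanti.measurable.comp hb)).aestronglyMeasurable
    · apply ae_of_all; intro v
      rw [norm_mul, norm_of_nonneg (pdfnn v), norm_of_nonneg (hG0 _)]
      calc gaussianPDFReal 0 1 v * G (b v) ≤ gaussianPDFReal 0 1 v * 1 :=
            mul_le_mul_of_nonneg_left (hG1 _) (pdfnn v)
        _ = gaussianPDFReal 0 1 v := mul_one _
  have hintH : IntegrableOn (fun v => gaussianPDFReal 0 1 v * H (b v)) (Set.Iio 0) volume := by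
    apply Integrable.mono ((integrable_gaussianPDFReal 0 1).restrict)
    · exact ((measurable_gaussianPDFReal 0 1).mul (hHmono.measurable.comp hb)).aestronglyMeasurable
    · apply ae_of_all; intro v
      rw [norm_mul, norm_of_nonneg (pdfnn v), norm_of_nonneg (hH0 _)]
      calc gaussianPDFReal 0 1 v * H (b v) ≤ gaussianPDFReal 0 1 v * 1 :=
            mul_le_mul_of_nonneg_left (hH1 _) (pdfnn v)
        _ = gaussianPDFReal 0 1 v := mul_one _
  have hMp : γ.prod γ Sp
      = ENNReal.ofReal (∫ v in Set.Ioi (0:ℝ), gaussianPDFReal 0 1 v * G (b v)) := by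
    rw [Measure.prod_apply hmSp]
    have hslice : ∀ v : ℝ, γ (Prod.mk v ⁻¹' Sp)
        = Set.indicator (Set.Ioi 0) (fun v => ENNReal.ofReal (G (b v))) v := by
      intro v
      by_cases h : (0:ℝ) < v
      · have he : Prod.mk v ⁻¹' Sp = Set.Ici (b v) := by
          ext y; simp [hSpdef, h]
        rw [he, Set.indicator_of_mem (by simpa using h), hγ,
          gaussianReal_apply_eq_integral 0 one_ne_zero]
      · have he : Prod.mk v ⁻¹' Sp = ∅ := by
          ext y; simp [hSpdef, h]
        rw [he, measure_empty, Set.indicator_of_notMem (by simpa using h)]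
    simp_rw [hslice]
    rw [lintegral_indicator measurableSet_Ioi _]
    rw [hγ, gaussianReal_of_var_ne_zero 0 one_ne_zero, restrict_withDensity measurableSet_Ioi,
      lintegral_withDensity_eq_lintegral_mul _ (measurable_gaussianPDF 0 1)
        (show Measurable fun v : ℝ => ENNReal.ofReal (G (b v)) from
          ENNReal.measurable_ofReal.comp (hGanti.measurable.comp hb))]
    have hpt : ∀ v : ℝ, (gaussianPDF 0 1 * fun v => ENNReal.ofReal (G (b v))) v
        = ENNReal.ofReal (gaussianPDFReal 0 1 v * G (b v)) := by
      intro v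
      simp only [Pi.mul_apply, gaussianPDF]
      rw [← ENNReal.ofReal_mul (pdfnn v)]
    simp_rw [hpt]
    rw [← ofReal_integral_eq_lintegral_ofReal hintG
      (ae_of_all _ fun v => mul_nonneg (pdfnn v) (hG0 _))]
  have hMm : γ.prod γ Sm
      = ENNReal.ofReal (∫ v in Set.Iio (0:ℝ), gaussianPDFReal 0 1 v * H (b v)) := by
    rw [Measure.prod_apply hmSm]
    have hslice : ∀ v : ℝ, γ (Prod.mk v ⁻¹' Sm)
        = Set.indicator (Set.Iio 0) (fun v => ENNReal.ofReal (H (b v))) v := by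
      intro v
      by_cases h : v < (0:ℝ)
      · have he : Prod.mk v ⁻¹' Sm = Set.Iic (b v) := by
          ext y; simp [hSmdef, h]
        rw [he, Set.indicator_of_mem (by simpa using h), hγ,
          gaussianReal_apply_eq_integral 0 one_ne_zero]
      · have he : Prod.mk v ⁻¹' Sm = ∅ := by
          ext y; simp [hSmdef, h]
        rw [he, measure_empty, Set.indicator_of_notMem (by simpa using h)]
    simp_rw [hslice]
    rw [lintegral_indicator measurableSet_Iio _]
    rw [hγ, gaussianReal_of_var_ne_zero 0 one_ne_zero, restrict_withDensity measurableSet_Iio,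
      lintegral_withDensity_eq_lintegral_mul _ (measurable_gaussianPDF 0 1)
        (show Measurable fun v : ℝ => ENNReal.ofReal (H (b v)) from
          ENNReal.measurable_ofReal.comp (hHmono.measurable.comp hb))]
    have hpt : ∀ v : ℝ, (gaussianPDF 0 1 * fun v => ENNReal.ofReal (H (b v))) v
        = ENNReal.ofReal (gaussianPDFReal 0 1 v * H (b v)) := by
      intro v
      simp only [Pi.mul_apply, gaussianPDF]
      rw [← ENNReal.ofReal_mul (pdfnn v)]
    simp_rw [hpt]
    rw [← ofReal_integral_eq_lintegral_ofReal hintH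
      (ae_of_all _ fun v => mul_nonneg (pdfnn v) (hH0 _))]
  -- identify the integrals
  have hI1 : ∫ v in Set.Ioi (0:ℝ), ∫ z1 in Set.Ioi (b v), (2*π)⁻¹ * rexp (-(z1^2+v^2)/2)
      = ∫ v in Set.Ioi (0:ℝ), gaussianPDFReal 0 1 v * G (b v) := by
    apply integral_congr_ae (ae_of_all _ ?_)
    intro v
    simp_rw [← prod_pdf_eq]
    rw [integral_mul_const, ← integral_Ici_eq_integral_Ioi, mul_comm]
  have hI2 : ∫ v in Set.Iio (0:ℝ), ∫ z1 in Set.Iio (b v), (2*π)⁻¹ * rexp (-(z1^2+v^2)/2)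
      = ∫ v in Set.Iio (0:ℝ), gaussianPDFReal 0 1 v * H (b v) := by
    apply integral_congr_ae (ae_of_all _ ?_)
    intro v
    simp_rw [← prod_pdf_eq]
    rw [integral_mul_const, ← integral_Iic_eq_integral_Iio, mul_comm]
  rw [hunion, measure_union hdisj hmSm, hMp, hMm, hI1, hI2,
    ENNReal.ofReal_add (integral_nonneg fun v => mul_nonneg (pdfnn v) (hG0 _))
      (integral_nonneg fun v => mul_nonneg (pdfnn v) (hH0 _))]

lemma bdd_iff {ω σ2 L u v : ℝ} (hω : 0 < ω) (hσ : 0 < σ2) (hL : 0 < L) :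
    L ≤ -(ω * (σ2 * (v^2 - 2*u*v))) ↔
      ((0 < v ∧ L/(2*ω*σ2*v) + v/2 ≤ u) ∨ (v < 0 ∧ u ≤ L/(2*ω*σ2*v) + v/2)) := by
  rcases lt_trichotomy v 0 with hv | hv | hv
  · have hD : 2*ω*σ2*v < 0 := mul_neg_of_pos_of_neg (by positivity) hv
    have h1 : (u ≤ L/(2*ω*σ2*v) + v/2) ↔ L ≤ -(ω * (σ2 * (v^2 - 2*u*v))) := by
      rw [← sub_le_iff_le_add, le_div_iff_of_neg hD,
        show (u - v/2) * (2*ω*σ2*v) = -(ω * (σ2 * (v^2 - 2*u*v))) by ring]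
    constructor
    · intro h; exact Or.inr ⟨hv, h1.mpr h⟩
    · rintro (⟨h0, -⟩ | ⟨-, h2⟩)
      · exact absurd (h0.trans hv) (lt_irrefl 0)
      · exact h1.mp h2
  · subst hv
    constructor
    · intro h
      exfalso
      have : -(ω * (σ2 * ((0:ℝ)^2 - 2*u*0))) = 0 := by ring
      rw [this] at h; linarith
    · rintro (⟨h0, -⟩ | ⟨h0, -⟩) <;> exact absurd h0 (lt_irrefl 0)
  · have hD : 0 < 2*ω*σ2*v := by positivity
    have h1 : (L/(2*ω*σ2*v) + v/2 ≤ u) ↔ L ≤ -(ω * (σ2 * (v^2 - 2*u*v))) := by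
      rw [← le_sub_iff_add_le, div_le_iff₀ hD,
        show (u - v/2) * (2*ω*σ2*v) = -(ω * (σ2 * (v^2 - 2*u*v))) by ring]
    constructor
    · intro h; exact Or.inl ⟨hv, h1.mpr h⟩
    · rintro (⟨-, h2⟩ | ⟨h0, -⟩)
      · exact h1.mp h2
      · exact absurd (hv.trans h0) (lt_irrefl 0)

end Aux

/-- Exact coverage of the offline GUe-value for the mean of a Gaussian under the
squared-error loss: with training sample `X_{n+1},…,X_{2n}` (estimator `θ̂` its sample
mean), validation sample `X_1,…,X_n`, and learning rate `ω > 0`,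
`Pr{G_{n,off}(θ*) ≥ α⁻¹}` equals the stated double Gaussian integral; consequently any
`ω > 0` making that expression equal `α` gives exact `1 - α` coverage. -/
theorem gaussian_offline_GUe_exact_coverage
    {Ω : Type*} [MeasurableSpace Ω]
    (μ : Measure Ω) [IsProbabilityMeasure μ]
    (θstar : ℝ) (σ2 : NNReal) (hσ2 : 0 < σ2)
    (n : ℕ) (hn : 0 < n)
    (X : ℕ → Ω → ℝ) (hXmeas : ∀ i, Measurable (X i))
    (hindep : iIndepFun X μ)
    (hiid : ∀ i, μ.map (X i) = gaussianReal θstar σ2)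
    (ω : ℝ) (hω : 0 < ω)
    (α : ℝ) (hα : α ∈ Set.Ioo (0 : ℝ) 1) :
    -- `Pr{G_{n,off}(θ*) ≥ 1/α}` equals the double Gaussian integral
    (μ {x | α⁻¹ ≤ Real.exp (-ω * ∑ i ∈ Finset.range n,
        ((X i x - (∑ j ∈ Finset.range n, X (n + j) x) / n) ^ 2 - (X i x - θstar) ^ 2))} =
      ENNReal.ofReal
        ((∫ z2 in Set.Ioi (0 : ℝ), ∫ z1 in Set.Ioi (gaussBoundary ω α (σ2 : ℝ) z2),
            (2 * Real.pi)⁻¹ * Real.exp (-(z1 ^ 2 + z2 ^ 2) / 2)) +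
          ∫ z2 in Set.Iio (0 : ℝ), ∫ z1 in Set.Iio (gaussBoundary ω α (σ2 : ℝ) z2),
            (2 * Real.pi)⁻¹ * Real.exp (-(z1 ^ 2 + z2 ^ 2) / 2))) ∧
    -- if that expression equals `α`, the GUe confidence set has exactly `1 - α` coverage
    (((∫ z2 in Set.Ioi (0 : ℝ), ∫ z1 in Set.Ioi (gaussBoundary ω α (σ2 : ℝ) z2),
          (2 * Real.pi)⁻¹ * Real.exp (-(z1 ^ 2 + z2 ^ 2) / 2)) +
        ∫ z2 in Set.Iio (0 : ℝ), ∫ z1 in Set.Iio (gaussBoundary ω α (σ2 : ℝ) z2),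
          (2 * Real.pi)⁻¹ * Real.exp (-(z1 ^ 2 + z2 ^ 2) / 2)) = α →
      μ {x | Real.exp (-ω * ∑ i ∈ Finset.range n,
          ((X i x - (∑ j ∈ Finset.range n, X (n + j) x) / n) ^ 2 - (X i x - θstar) ^ 2)) <
        α⁻¹} = ENNReal.ofReal (1 - α)) := by
  obtain ⟨hα0, hα1⟩ := hα
  have hσ2' : (0:ℝ) < σ2 := hσ2
  have hn' : (0:ℝ) < n := by exact_mod_cast hn
  have hσ2ne : σ2 ≠ 0 := hσ2.ne'
  -- sums
  set sN : Ω → ℝ := fun x => ∑ i ∈ Finset.range n, X i x with hsNdef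
  set imgT : Finset ℕ := (Finset.range n).image (n + ·) with himgdef
  set tN : Ω → ℝ := fun x => ∑ i ∈ imgT, X i x with htNdef
  have htN : ∀ x, tN x = ∑ j ∈ Finset.range n, X (n + j) x := by
    intro x
    rw [htNdef, himgdef]
    exact Finset.sum_image (fun a _ b _ h => by omega)
  have hsNmeas : Measurable sN := Finset.measurable_sum _ (fun i _ => hXmeas i)
  have htNmeas : Measurable tN := Finset.measurable_sum _ (fun i _ => hXmeas i)
  -- laws of the sums
  have hSlaw : μ.map sN = gaussianReal (n * θstar) ((n : NNReal) * σ2) := by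
    have h := map_sum_gaussian hXmeas hindep hσ2ne hiid (Finset.range n)
      (Finset.nonempty_range_iff.mpr hn.ne')
    simpa [Finset.card_range] using h
  have himgcard : imgT.card = n := by
    rw [himgdef, Finset.card_image_of_injective _ (add_right_injective n), Finset.card_range]
  have hTlaw : μ.map tN = gaussianReal (n * θstar) ((n : NNReal) * σ2) := by
    have hne : imgT.Nonempty := by
      rw [himgdef]
      exact (Finset.nonempty_range_iff.mpr hn.ne').image _
    have h := map_sum_gaussian hXmeas hindep hσ2ne hiid imgT hne
    rwa [himgcard] at h
  -- standardization
  set c : ℝ := Real.sqrt (n * σ2) with hcdef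
  have hc : 0 < c := Real.sqrt_pos.mpr (by positivity)
  have hc2 : c ^ 2 = n * σ2 := Real.sq_sqrt (by positivity)
  set U : Ω → ℝ := fun x => (sN x - n * θstar) / c with hUdef
  set V : Ω → ℝ := fun x => (tN x - n * θstar) / c with hVdef
  have hUmeas : Measurable U := (hsNmeas.sub_const _).div_const _
  have hVmeas : Measurable V := (htNmeas.sub_const _).div_const _
  have hstd : ∀ (W : Ω → ℝ), Measurable W →
      μ.map W = gaussianReal (n * θstar) ((n : NNReal) * σ2) →
      μ.map (fun x => (W x - n * θstar) / c) = gaussianReal 0 1 := by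
    intro W hWm hW
    have h0 : μ.map (fun x => W x - n * θstar) = gaussianReal 0 ((n : NNReal) * σ2) :=
      map_center hWm hW
    have hcomp : (fun x => (W x - n * θstar) / c)
        = (fun y => y * c⁻¹) ∘ (fun x => W x - n * θstar) := by
      funext x; simp [div_eq_mul_inv]
    rw [hcomp, ← Measure.map_map (measurable_mul_const _) (hWm.sub_const _), h0,
      gaussianReal_map_mul_const]
    rw [mul_zero]
    congr 1
    apply NNReal.coe_injective
    push_cast
    rw [inv_pow, hc2]
    field_simp
  have hU : μ.map U = gaussianReal 0 1 := hstd sN hsNmeas hSlaw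
  have hV : μ.map V = gaussianReal 0 1 := hstd tN htNmeas hTlaw
  -- independence of the two sums
  have hVU : IndepFun V U μ := by
    have hd : Disjoint imgT (Finset.range n) := by
      rw [himgdef, Finset.disjoint_left]
      intro a ha ha'
      simp only [Finset.mem_image, Finset.mem_range] at ha ha'
      omega
    have h := hindep.indepFun_finset imgT (Finset.range n) hd hXmeas
    have hsum : ∀ (s : Finset ℕ), Measurable (fun f : ↥s → ℝ => ∑ i, f i) :=
      fun s => Finset.measurable_sum _ (fun i _ => measurable_pi_apply i)
    have h2 := (h.comp (hsum imgT) (hsum (Finset.range n))).comp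
      ((measurable_id.sub_const ((n : ℝ) * θstar)).div_const c)
      ((measurable_id.sub_const ((n : ℝ) * θstar)).div_const c)
    have he1 : ((fun y => (y - n * θstar) / c) ∘ (fun f : ↥imgT → ℝ => ∑ i, f i)
        ∘ (fun a (i : imgT) => X i a)) = V := by
      funext a
      simp only [Function.comp_apply, hVdef, htNdef]
      congr 1
      rw [← Finset.sum_coe_sort imgT (fun i => X i a)]
    have he2 : ((fun y => (y - n * θstar) / c)
        ∘ (fun f : ↥(Finset.range n) → ℝ => ∑ i, f i)
        ∘ (fun a (i : (Finset.range n : Finset ℕ)) => X i a)) = U := by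
      funext a
      simp only [Function.comp_apply, hUdef, hsNdef]
      congr 1
      rw [← Finset.sum_coe_sort (Finset.range n) (fun i => X i a)]
    rw [← he1, ← he2]
    exact h2
  -- joint law
  have hmap2 : μ.map (fun x => (V x, U x)) = (gaussianReal 0 1).prod (gaussianReal 0 1) := by
    rw [(indepFun_iff_map_prod_eq_prod_map_map hVmeas.aemeasurable hUmeas.aemeasurable).mp hVU,
      hV, hU]
  have hbmeas : Measurable (gaussBoundary ω α σ2) := by
    have hbe : gaussBoundary ω α σ2 = fun z => Real.log (1/α)/(2*ω*σ2*z) + z/2 := rfl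
    rw [hbe]
    exact (measurable_const.div (measurable_const.mul measurable_id)).add
      (measurable_id.div_const 2)
  set R : Set (ℝ × ℝ) := {p | (0 < p.1 ∧ gaussBoundary ω α σ2 p.1 ≤ p.2)
      ∨ (p.1 < 0 ∧ p.2 ≤ gaussBoundary ω α σ2 p.1)} with hRdef
  have hmR : MeasurableSet R :=
    ((measurableSet_lt measurable_const measurable_fst).inter
      (measurableSet_le (hbmeas.comp measurable_fst) measurable_snd)).union
    ((measurableSet_lt measurable_fst measurable_const).inter
      (measurableSet_le measurable_snd (hbmeas.comp measurable_fst)))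
  -- the sum identity
  have hSig : ∀ x, (∑ i ∈ Finset.range n,
      ((X i x - (∑ j ∈ Finset.range n, X (n + j) x) / n) ^ 2 - (X i x - θstar) ^ 2))
      = σ2 * ((V x)^2 - 2 * (U x) * (V x)) := by
    intro x
    rw [← htN x]
    have hterm : ∀ i ∈ Finset.range n, ((X i x - tN x / n) ^ 2 - (X i x - θstar) ^ 2)
        = -(2*(tN x/n - θstar)) * X i x + ((tN x/n)^2 - θstar^2) := fun i _ => by ring
    rw [Finset.sum_congr rfl hterm, Finset.sum_add_distrib, ← Finset.mul_sum,
      Finset.sum_const, Finset.card_range, nsmul_eq_mul]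
    show -(2*(tN x/n - θstar)) * sN x + n * ((tN x/n)^2 - θstar^2)
      = σ2 * ((V x)^2 - 2 * (U x) * (V x))
    have hUx : U x = (sN x - n*θstar)/c := rfl
    have hVx : V x = (tN x - n*θstar)/c := rfl
    rw [hUx, hVx]
    generalize sN x = s
    generalize tN x = t
    have hσc : (σ2:ℝ) = c^2/n := by rw [hc2]; field_simp
    rw [hσc]
    field_simp
    ring
  have h1α : 1 < α⁻¹ := one_lt_inv_iff₀.mpr ⟨hα0, hα1⟩
  have hL : 0 < Real.log α⁻¹ := Real.log_pos h1α
  have hevent : {x | α⁻¹ ≤ Real.exp (-ω * ∑ i ∈ Finset.range n,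
        ((X i x - (∑ j ∈ Finset.range n, X (n + j) x) / n) ^ 2 - (X i x - θstar) ^ 2))}
      = (fun x => (V x, U x)) ⁻¹' R := by
    ext x
    simp only [Set.mem_setOf_eq, Set.mem_preimage, hRdef]
    rw [hSig x,
      show -ω * ((σ2:ℝ) * ((V x)^2 - 2*U x*V x)) = -(ω * ((σ2:ℝ) * ((V x)^2 - 2*U x*V x))) by
        ring,
      ← Real.log_le_iff_le_exp (by positivity : (0:ℝ) < α⁻¹),
      bdd_iff hω hσ2' hL]
    have hbeq : ∀ w, gaussBoundary ω α σ2 w = Real.log α⁻¹/(2*ω*σ2*w) + w/2 := by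
      intro w; rw [gaussBoundary, one_div]
    simp only [hbeq]
  have hEmeas : MeasurableSet ((fun x => (V x, U x)) ⁻¹' R) := (hVmeas.prodMk hUmeas) hmR
  have hprob : μ {x | α⁻¹ ≤ Real.exp (-ω * ∑ i ∈ Finset.range n,
        ((X i x - (∑ j ∈ Finset.range n, X (n + j) x) / n) ^ 2 - (X i x - θstar) ^ 2))}
      = ENNReal.ofReal
        ((∫ z2 in Set.Ioi (0 : ℝ), ∫ z1 in Set.Ioi (gaussBoundary ω α (σ2 : ℝ) z2),
            (2 * Real.pi)⁻¹ * Real.exp (-(z1 ^ 2 + z2 ^ 2) / 2)) +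
          ∫ z2 in Set.Iio (0 : ℝ), ∫ z1 in Set.Iio (gaussBoundary ω α (σ2 : ℝ) z2),
            (2 * Real.pi)⁻¹ * Real.exp (-(z1 ^ 2 + z2 ^ 2) / 2)) := by
    rw [hevent, ← Measure.map_apply (hVmeas.prodMk hUmeas) hmR, hmap2, hRdef]
    exact region_measure _ hbmeas
  refine ⟨hprob, fun heq => ?_⟩
  have hcompl : {x | Real.exp (-ω * ∑ i ∈ Finset.range n,
        ((X i x - (∑ j ∈ Finset.range n, X (n + j) x) / n) ^ 2 - (X i x - θstar) ^ 2)) < α⁻¹}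
      = {x | α⁻¹ ≤ Real.exp (-ω * ∑ i ∈ Finset.range n,
        ((X i x - (∑ j ∈ Finset.range n, X (n + j) x) / n) ^ 2 - (X i x - θstar) ^ 2))}ᶜ := by
    ext x
    simp [not_le]
  rw [hcompl, measure_compl (hevent ▸ hEmeas) (measure_ne_top _ _), measure_univ, hprob, heq,
    ENNReal.ofReal_sub _ hα0.le, ENNReal.ofReal_one]

end
end

section
/- Let Z_1, Z_2, … be i.i.d. real random variables with mean θ* and finite variance, use the squared-error loss ℓ(θ, z) = (z − θ)², let θ̂_k be the running sample mean k^{−1}∑_{i=1}^k Z_i for k ≥ 1 with θ̂_0 a fixed constant, and fix any ω > 0 and α ∈ (0,1). If (θ_n)_{n∈ℕ} satisfies θ_n − θ* ≳ (n/log n)^{−1/2} with a sufficiently large hidden constant (i.e., θ_n = θ* + a_n n^{−1/2} with a_n eventually at least a sufficiently large multiple of (log n)^{1/2}), then Pr{ G_{n,on}(θ_n) ≥ α^{−1} } → 1 as n → ∞. -/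
open MeasureTheory ProbabilityTheory Filter Topology

noncomputable section

/-- The running sample mean: `θ̂_0` is a fixed constant `c0`, and
`θ̂_k = k⁻¹ ∑_{i=1}^k Z_i` for `k ≥ 1`. -/
def runMean {Ω : Type*} (Z : ℕ → Ω → ℝ) (c0 : ℝ) : ℕ → Ω → ℝ
  | 0 => fun _ => c0
  | k + 1 => fun x => (∑ i ∈ Finset.range (k + 1), Z i x) / (k + 1)

lemma GUe_key_identity {Ω : Type*} (Z : ℕ → Ω → ℝ) (c0 θ : ℝ) (x : Ω) (n : ℕ) :
    ∑ i ∈ Finset.range n, ((Z i x - θ)^2 - (Z i x - runMean Z c0 i x)^2)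
      = n * (runMean Z c0 n x - θ)^2
        - ∑ i ∈ Finset.range n, (Z i x - runMean Z c0 i x)^2 / (i+1) := by
  induction n with
  | zero => simp [runMean]
  | succ n ih =>
      rw [Finset.sum_range_succ, Finset.sum_range_succ (f := fun i => (Z i x - runMean Z c0 i x)^2 / (i+1)), ih]
      cases n with
      | zero =>
          simp only [runMean] at *
          norm_num [Finset.sum_range_one]
      | succ k =>
          have h1 : runMean Z c0 (k+1) x = (∑ i ∈ Finset.range (k+1), Z i x) / (k+1) := rfl
          have h2 : runMean Z c0 (k+2) x = (∑ i ∈ Finset.range (k+2), Z i x) / (((k+1:ℕ):ℝ)+1) := rfl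
          have hs : (∑ i ∈ Finset.range (k+2), Z i x) = (∑ i ∈ Finset.range (k+1), Z i x) + Z (k+1) x :=
            Finset.sum_range_succ _ _
          rw [h1, h2, hs] at *
          have hk1 : ((k:ℝ)+1) ≠ 0 := by positivity
          have hk2 : ((k:ℝ)+2) ≠ 0 := by positivity
          push_cast
          field_simp
          ring

lemma GUe_runMean_sub {Ω : Type*} (Z : ℕ → Ω → ℝ) (c0 θstar : ℝ) (x : Ω) (n : ℕ) (hn : 1 ≤ n) :
    runMean Z c0 n x - θstar = (∑ j ∈ Finset.range n, (Z j x - θstar)) / n := by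
  obtain ⟨k, rfl⟩ := Nat.exists_eq_add_of_le hn
  have h1 : runMean Z c0 (1+k) x = (∑ i ∈ Finset.range (k+1), Z i x) / (((k:ℝ))+1) := by
    rw [Nat.add_comm 1 k]; rfl
  rw [h1, Finset.sum_sub_distrib, Finset.sum_const, Finset.card_range]
  have hk1 : ((k:ℝ)+1) ≠ 0 := by positivity
  rw [Nat.add_comm 1 k]
  push_cast
  field_simp
  simp [nsmul_eq_mul]

lemma GUe_harmonic_le_log (n : ℕ) (hn : 1 ≤ n) :
    ∑ i ∈ Finset.range n, (1:ℝ)/(i+1) ≤ 1 + Real.log n := by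
  induction n with
  | zero => omega
  | succ n ih =>
      rcases Nat.eq_or_lt_of_le hn with h | h
      · simp [← h]
      · have hn1 : 1 ≤ n := by omega
        have hpos : (0:ℝ) < n := by exact_mod_cast Nat.pos_of_ne_zero (by omega)
        have key : (1:ℝ)/(n+1) ≤ Real.log (n+1) - Real.log n := by
          have h2 : Real.log ((n:ℝ)/(n+1)) ≤ (n:ℝ)/(n+1) - 1 :=
            Real.log_le_sub_one_of_pos (by positivity)
          rw [Real.log_div (ne_of_gt hpos) (by positivity)] at h2
          have : (n:ℝ)/(n+1) - 1 = -(1/(n+1)) := by field_simp; ring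
          rw [this] at h2
          linarith
        have := ih hn1
        rw [Finset.sum_range_succ]
        push_cast
        linarith

lemma GUe_abel_bound (c : ℕ → ℝ) (hc : ∀ i, 0 ≤ c i) (K : ℝ) (hK : 0 ≤ K) (N : ℕ) (hN : 1 ≤ N)
    (hT : ∀ i, N ≤ i → ∑ j ∈ Finset.range i, c j ≤ K * i) :
    ∀ n, N ≤ n → ∑ i ∈ Finset.range n, c i / (i+1)
      ≤ (∑ i ∈ Finset.range N, c i / (i+1)) + K * (2 + Real.log n) := by
  set U : ℕ → ℝ := fun n => ∑ i ∈ Finset.range n, c i / (i+1) with hU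
  set T : ℕ → ℝ := fun n => ∑ i ∈ Finset.range n, c i with hT'
  have hTnn : ∀ n, 0 ≤ T n := fun n => Finset.sum_nonneg fun i _ => hc i
  have inv : ∀ n, N ≤ n → U n - T n / n ≤ U N + K * (∑ i ∈ Finset.range n, (1:ℝ)/(i+1)) := by
    intro n hn
    induction n, hn using Nat.le_induction with
    | base =>
        have : 0 ≤ T N / N := div_nonneg (hTnn N) (Nat.cast_nonneg N)
        have h2 : 0 ≤ K * (∑ i ∈ Finset.range N, (1:ℝ)/(i+1)) := by
          apply mul_nonneg hK (Finset.sum_nonneg fun i _ => by positivity)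
        linarith
    | succ n hn ih =>
        have hnpos : (0:ℝ) < n := by exact_mod_cast Nat.pos_of_ne_zero (by omega)
        have hstep : U (n+1) - T (n+1) / (n+1) = U n - T n / n + T n / (n * (n+1)) := by
          have hU1 : U (n+1) = U n + c n / (n+1) := Finset.sum_range_succ _ _
          have hT1 : T (n+1) = T n + c n := Finset.sum_range_succ _ _
          rw [hU1, hT1]
          push_cast
          field_simp
          ring
        have hb : T n / (n * (n+1)) ≤ K / (n+1) := by
          rw [div_le_div_iff₀ (by positivity) (by positivity)]
          have := hT n hn
          nlinarith [hTnn n]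
        push_cast
        rw [hstep, Finset.sum_range_succ]
        have e1 : K * (∑ i ∈ Finset.range n, (1:ℝ)/(i+1) + 1/(n+1))
            = K * (∑ i ∈ Finset.range n, (1:ℝ)/(i+1)) + K * (1/(n+1)) := by ring
        have e2 : K / ((n:ℝ)+1) = K * (1/((n:ℝ)+1)) := by ring
        push_cast
        rw [e1]
        linarith [ih, hb, e2]
  intro n hn
  have h1 := inv n hn
  have h2 := GUe_harmonic_le_log n (le_trans hN hn)
  have h3 : T n / n ≤ K := by
    have := hT n hn
    have hnpos : (0:ℝ) < n := by exact_mod_cast Nat.pos_of_ne_zero (by omega)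
    rw [div_le_iff₀ hnpos]; linarith
  have h4 : K * (∑ i ∈ Finset.range n, (1:ℝ)/(i+1)) ≤ K * (1 + Real.log n) :=
    mul_le_mul_of_nonneg_left h2 hK
  have h5 : U n ≤ U N + K * (1 + Real.log n) + K := by linarith
  calc U n ≤ U N + K * (1 + Real.log n) + K := h5
    _ = U N + K * (2 + Real.log n) := by ring

lemma GUe_tendsto_prob_of_ae_eventually {Ω : Type*} [MeasurableSpace Ω]
    (μ : Measure Ω) [IsProbabilityMeasure μ] (Q : ℕ → Set Ω)
    (hmeas : ∀ n, MeasurableSet (Q n))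
    (hae : ∀ᵐ x ∂μ, ∀ᶠ n in atTop, x ∈ Q n) :
    Tendsto (fun n => μ (Q n)) atTop (𝓝 1) := by
  set R : ℕ → Set Ω := fun n => ⋂ k, ⋂ (_ : n ≤ k), Q k with hR
  have hRmeas : ∀ n, MeasurableSet (R n) := fun n =>
    MeasurableSet.iInter fun k => MeasurableSet.iInter fun _ => hmeas k
  have hmono : Monotone R := by
    intro a b hab
    exact Set.iInter₂_mono' fun k hk => ⟨k, le_trans hab hk, le_rfl⟩
  have hunion : {x | ∀ᶠ n in atTop, x ∈ Q n} = ⋃ n, R n := by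
    ext x
    simp [hR, eventually_atTop, Set.mem_iUnion]
  have h1 : μ (⋃ n, R n) = 1 := by
    rw [← hunion]
    have hm : MeasurableSet {x | ∀ᶠ n in atTop, x ∈ Q n} := by
      rw [hunion]; exact MeasurableSet.iUnion hRmeas
    have := (ae_iff_measure_eq (μ := μ) hm.nullMeasurableSet).1 hae
    simpa using this
  have h2 : Tendsto (fun n => μ (R n)) atTop (𝓝 1) := by
    have := tendsto_measure_iUnion_atTop (μ := μ) hmono
    rw [h1] at this
    exact this
  refine tendsto_of_tendsto_of_tendsto_of_le_of_le h2 tendsto_const_nhds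
    (fun n => measure_mono ?_) (fun n => prob_le_one)
  intro x hx
  exact Set.mem_iInter₂.1 hx n le_rfl

set_option maxHeartbeats 2000000 in
/-- Near-efficiency of the online GUe confidence set for the mean under the squared-error
loss: for alternatives `θ_n` with `θ_n - θ* ≳ (n / log n)^{-1/2}` with a sufficiently large
hidden constant, `Pr{G_{n,on}(θ_n) ≥ α⁻¹} → 1`. -/
theorem online_GUe_L2_power_rate
    {Ω : Type*} [MeasurableSpace Ω]
    (μ : Measure Ω) [IsProbabilityMeasure μ]
    (D : Measure ℝ) [IsProbabilityMeasure D]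
    (Z : ℕ → Ω → ℝ) (hZmeas : ∀ i, Measurable (Z i))
    (hindep : iIndepFun Z μ)
    (hiid : ∀ i, μ.map (Z i) = D)
    (θstar : ℝ) (hmean : ∫ z, z ∂D = θstar)
    (hvarfin : MemLp id 2 D)
    (c0 : ℝ) (ω : ℝ) (hω : 0 < ω)
    (α : ℝ) (hα : α ∈ Set.Ioo (0 : ℝ) 1) :
    ∃ C : ℝ, 0 < C ∧ ∀ θseq : ℕ → ℝ,
      (∀ᶠ n : ℕ in atTop, C * Real.sqrt (Real.log n / n) ≤ θseq n - θstar) →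
      Tendsto
        (fun n => μ {x | α⁻¹ ≤ Real.exp (-ω * ∑ i ∈ Finset.range n,
          ((Z i x - runMean Z c0 i x) ^ 2 - (Z i x - θseq n) ^ 2))})
        atTop (nhds 1) := by
  obtain ⟨hα0, hα1⟩ := hα
  -- basic setup about X i = Z i - θstar
  set X : ℕ → Ω → ℝ := fun i x => Z i x - θstar with hXdef
  have hXmeas : ∀ i, Measurable (X i) := fun i => (hZmeas i).sub measurable_const
  have hZL2 : ∀ i, MemLp (Z i) 2 μ := by
    intro i
    have h := hvarfin
    rw [← hiid i] at h
    have := (memLp_map_measure_iff aestronglyMeasurable_id (hZmeas i).aemeasurable).1 h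
    simpa [Function.comp] using this
  have hXL2 : ∀ i, MemLp (X i) 2 μ := fun i => (hZL2 i).sub (memLp_const θstar)
  have hXint : ∀ i, Integrable (X i) μ := fun i => (hXL2 i).integrable one_le_two
  have hZint : ∀ i, Integrable (Z i) μ := fun i => (hZL2 i).integrable one_le_two
  have hZmean : ∀ i, ∫ x, Z i x ∂μ = θstar := by
    intro i
    have : ∫ x, Z i x ∂μ = ∫ z, z ∂D := by
      rw [← hiid i]
      exact (integral_map (hZmeas i).aemeasurable aestronglyMeasurable_id).symm
    rw [this, hmean]
  have hXmean : ∀ i, ∫ x, X i x ∂μ = 0 := by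
    intro i
    rw [hXdef]
    simp only []
    rw [integral_sub (hZint i) (integrable_const _), hZmean i]
    simp
  set σ2 : ℝ := ∫ x, (X 0 x)^2 ∂μ with hσ2def
  have hXsq_int : ∀ i, Integrable (fun x => (X i x)^2) μ := by
    intro i
    simpa [sq] using (hXL2 i).integrable_sq
  have hXsq_mean : ∀ i, ∫ x, (X i x)^2 ∂μ = σ2 := by
    intro i
    have key : ∀ j, ∫ x, (X j x)^2 ∂μ = ∫ z, (z - θstar)^2 ∂D := by
      intro j
      rw [← hiid j]
      exact (integral_map (hZmeas j).aemeasurable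
        (((measurable_id.sub measurable_const).pow_const 2).aestronglyMeasurable)).symm
    rw [key i, hσ2def, key 0]
  have hσ2nn : 0 ≤ σ2 := by
    rw [hσ2def]; positivity
  have hvar : ∀ i, variance (X i) μ = σ2 := by
    intro i
    rw [variance_eq_sub (hXL2 i), hXmean i]
    simpa [sq] using hXsq_mean i
  have hindepX : ∀ i j, i ≠ j → IndepFun (X i) (X j) μ := by
    intro i j hij
    exact (hindep.indepFun hij).comp (measurable_id.sub measurable_const)
      (measurable_id.sub measurable_const)
  have hsumL2 : ∀ n, MemLp (∑ j ∈ Finset.range n, X j) 2 μ :=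
    fun n => memLp_finset_sum' _ (fun i _ => hXL2 i)
  have hvarsum : ∀ n : ℕ, variance (∑ j ∈ Finset.range n, X j) μ = n * σ2 := by
    intro n
    rw [IndepFun.variance_sum (fun i _ => hXL2 i)
      (fun i _ j _ hij => hindepX i j hij)]
    simp [hvar, Finset.sum_const, Finset.card_range, nsmul_eq_mul]
  have hsum_mean : ∀ n : ℕ, ∫ x, (∑ j ∈ Finset.range n, X j) x ∂μ = 0 := by
    intro n
    simp only [Finset.sum_apply]
    rw [integral_finset_sum _ (fun i _ => hXint i)]
    simp [hXmean]
  have hsumsq_mean : ∀ n : ℕ, ∫ x, (∑ j ∈ Finset.range n, X j x)^2 ∂μ = n * σ2 := by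
    intro n
    have h := variance_eq_sub (hsumL2 n)
    rw [hvarsum n] at h
    have h2 : μ[∑ j ∈ Finset.range n, X j] = 0 := hsum_mean n
    rw [h2] at h
    have : μ[(∑ j ∈ Finset.range n, X j)^2] = ∫ x, (∑ j ∈ Finset.range n, X j x)^2 ∂μ := by
      congr 1
      funext x
      simp [Finset.sum_apply]
    rw [this] at h
    linarith [h]
  -- log tendsto
  have hlogtend : Tendsto (fun n : ℕ => Real.log n) atTop atTop :=
    Real.tendsto_log_atTop.comp tendsto_natCast_atTop_atTop
  -- the constant
  set K : ℝ := σ2 + 1 with hKdef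
  set C : ℝ := Real.sqrt (32 * (σ2 + 2)) with hCdef
  have hC2 : C^2 = 32*(σ2+2) := Real.sq_sqrt (by linarith)
  have hCpos : 0 < C := Real.sqrt_pos.2 (by linarith)
  refine ⟨C, hCpos, fun θseq hθ => ?_⟩
  -- measurability of running means
  have hmmeas : ∀ n, Measurable (fun x => runMean Z c0 n x) := by
    intro n
    cases n with
    | zero => exact measurable_const
    | succ k =>
        have : (fun x => runMean Z c0 (k+1) x)
            = fun x => (∑ i ∈ Finset.range (k+1), Z i x) / ((k:ℝ)+1) := rfl
        rw [this]
        exact (Finset.measurable_sum _ (fun i _ => hZmeas i)).div_const _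
  -- thresholds and events
  set τA : ℕ → ℝ := fun n => C^2/8 * Real.log n with hτA
  set τB : ℕ → ℝ := fun n => C^2/32 * Real.log n with hτB
  set SA : ℕ → Set Ω := fun n => {x | (n:ℝ) * (runMean Z c0 n x - θstar)^2 ≤ τA n} with hSA
  set SB : ℕ → Set Ω := fun n =>
    {x | (∑ i ∈ Finset.range n, (runMean Z c0 i x - θstar)^2/((i:ℝ)+1)) ≤ τB n} with hSB
  set SC : ℕ → Set Ω := fun n =>
    {x | (∑ i ∈ Finset.range n, (X i x)^2/((i:ℝ)+1)) ≤ τB n} with hSC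
  have hSAmeas : ∀ n, MeasurableSet (SA n) := by
    intro n
    exact measurableSet_le (measurable_const.mul (((hmmeas n).sub measurable_const).pow_const 2)) measurable_const
  have hSBmeas : ∀ n, MeasurableSet (SB n) := by
    intro n
    apply measurableSet_le _ measurable_const
    exact Finset.measurable_sum _ (fun i _ => (((hmmeas i).sub measurable_const).pow_const 2).div_const _)
  have hSCmeas : ∀ n, MeasurableSet (SC n) := by
    intro n
    apply measurableSet_le _ measurable_const
    exact Finset.measurable_sum _ (fun i _ => ((hXmeas i).pow_const 2).div_const _)
  -- Part A
  have htailA : Tendsto (fun n : ℕ => ENNReal.ofReal (σ2 / τA n)) atTop (𝓝 0) := by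
    have h1 : Tendsto (fun n : ℕ => τA n) atTop atTop := by
      have hc : 0 < C^2/8 := by positivity
      exact hlogtend.const_mul_atTop hc
    have h2 : Tendsto (fun n : ℕ => σ2 / τA n) atTop (𝓝 0) :=
      Tendsto.div_atTop tendsto_const_nhds h1
    have h3 := ENNReal.tendsto_ofReal h2
    simpa using h3
  have hAtend : Tendsto (fun n => μ (SA n)ᶜ) atTop (𝓝 0) := by
    have hbound : ∀ᶠ n in atTop, μ (SA n)ᶜ ≤ ENNReal.ofReal (σ2 / τA n) := by
      filter_upwards [eventually_ge_atTop 2] with n hn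
      have hn1 : (1:ℝ) < n := by exact_mod_cast (by omega : 1 < n)
      have hnpos : (0:ℝ) < n := lt_trans one_pos hn1
      have hlogpos : 0 < Real.log n := Real.log_pos hn1
      have hτpos : 0 < τA n := by
        rw [hτA]
        have : (0:ℝ) < C^2/8 := by positivity
        exact mul_pos this hlogpos
      have hcheb := meas_ge_le_variance_div_sq (μ := μ) (hsumL2 n)
        (c := Real.sqrt (τA n * n)) (Real.sqrt_pos.2 (mul_pos hτpos hnpos))
      have hincl : (SA n)ᶜ ⊆
          {x | Real.sqrt (τA n * n) ≤
            |(∑ j ∈ Finset.range n, X j) x - μ[∑ j ∈ Finset.range n, X j]|} := by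
        intro x hx
        simp only [Set.mem_compl_iff, Set.mem_setOf_eq, not_le, hSA] at hx ⊢
        rw [hsum_mean n, sub_zero]
        have hms : runMean Z c0 n x - θstar = (∑ j ∈ Finset.range n, X j x)/n :=
          GUe_runMean_sub Z c0 θstar x n (by omega)
        rw [hms] at hx
        have happ : (∑ j ∈ Finset.range n, X j) x = ∑ j ∈ Finset.range n, X j x := by
          simp
        have heq : (n:ℝ) * ((∑ j ∈ Finset.range n, X j x)/n)^2
            = (∑ j ∈ Finset.range n, X j x)^2 / n := by
          field_simp
        rw [heq] at hx
        have hsq : τA n * n < ((∑ j ∈ Finset.range n, X j) x)^2 := by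
          rw [happ]
          exact (lt_div_iff₀ hnpos).1 hx
        calc Real.sqrt (τA n * n)
            ≤ Real.sqrt (((∑ j ∈ Finset.range n, X j) x)^2) := Real.sqrt_le_sqrt hsq.le
          _ = |(∑ j ∈ Finset.range n, X j) x| := Real.sqrt_sq_eq_abs _
      calc μ (SA n)ᶜ
          ≤ μ {x | Real.sqrt (τA n * n) ≤
              |(∑ j ∈ Finset.range n, X j) x - μ[∑ j ∈ Finset.range n, X j]|} :=
            measure_mono hincl
        _ ≤ ENNReal.ofReal (variance (∑ j ∈ Finset.range n, X j) μ
              / Real.sqrt (τA n * n) ^ 2) := hcheb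
        _ ≤ ENNReal.ofReal (σ2 / τA n) := by
            apply ENNReal.ofReal_le_ofReal
            rw [hvarsum n, Real.sq_sqrt (mul_pos hτpos hnpos).le]
            apply le_of_eq
            field_simp
    exact tendsto_of_tendsto_of_tendsto_of_le_of_le' tendsto_const_nhds htailA
      (Eventually.of_forall (fun n => zero_le)) hbound
  -- Part B
  have hdL2 : ∀ i : ℕ, MemLp (fun x => runMean Z c0 i x - θstar) 2 μ := by
    intro i
    cases i with
    | zero =>
        have h0 : (fun x : Ω => runMean Z c0 0 x - θstar) = fun _ : Ω => c0 - θstar := rfl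
        rw [h0]
        exact memLp_const _
    | succ k =>
        have heq : (fun x => runMean Z c0 (k+1) x - θstar)
            = fun x => (((k:ℝ)+1))⁻¹ * (∑ j ∈ Finset.range (k+1), X j) x := by
          funext x
          rw [GUe_runMean_sub Z c0 θstar x (k+1) (by omega)]
          push_cast
          simp [Finset.sum_apply]
          simp only [hXdef, Finset.sum_sub_distrib, Finset.sum_const, Finset.card_range, nsmul_eq_mul]; push_cast; ring
        rw [heq]
        exact (hsumL2 (k+1)).const_mul _
  have hBint : ∀ i : ℕ, Integrable (fun x => (runMean Z c0 i x - θstar)^2 / ((i:ℝ)+1)) μ := by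
    intro i
    have h := (hdL2 i).integrable_sq
    have h2 : Integrable (fun x => (runMean Z c0 i x - θstar)^2) μ := by
      simpa [sq] using h
    exact h2.div_const _
  have hd_mean : ∀ i : ℕ, 1 ≤ i → ∫ x, (runMean Z c0 i x - θstar)^2 ∂μ = σ2 / i := by
    intro i hi
    have hipos : (0:ℝ) < i := by exact_mod_cast Nat.pos_of_ne_zero (by omega)
    have h1 : ∫ x, (runMean Z c0 i x - θstar)^2 ∂μ
        = ∫ x, (∑ j ∈ Finset.range i, X j x)^2 / (i:ℝ)^2 ∂μ := by
      apply integral_congr_ae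
      filter_upwards with x
      rw [GUe_runMean_sub Z c0 θstar x i hi, div_pow]
    rw [h1, integral_div, hsumsq_mean i]
    field_simp
  set B0 : ℝ := (c0 - θstar)^2 + σ2 with hB0
  have hB0nn : 0 ≤ B0 := by positivity
  have hEB : ∀ n : ℕ,
      ∫ x, (∑ i ∈ Finset.range n, (runMean Z c0 i x - θstar)^2/((i:ℝ)+1)) ∂μ ≤ B0 := by
    intro n
    rw [integral_finset_sum _ (fun i _ => hBint i)]
    cases n with
    | zero => simpa using hB0nn
    | succ m =>
        rw [Finset.sum_range_succ']
        have hterm0 : ∫ x, (runMean Z c0 0 x - θstar)^2 / (((0:ℕ):ℝ)+1) ∂μ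
            = (c0 - θstar)^2 := by
          have heq0 : (fun x : Ω => (runMean Z c0 0 x - θstar)^2 / (((0:ℕ):ℝ)+1))
              = fun _ : Ω => (c0 - θstar)^2 := by
            funext x
            simp [runMean]
          rw [heq0, integral_const]
          simp
        have hterm : ∀ i : ℕ, ∫ x, (runMean Z c0 (i+1) x - θstar)^2 / (((i+1:ℕ):ℝ)+1) ∂μ
            = σ2/((i:ℝ)+1) - σ2/((i:ℝ)+2) := by
          intro i
          rw [integral_div, hd_mean (i+1) (by omega)]
          push_cast
          have h1 : ((i:ℝ)+1) ≠ 0 := by positivity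
          have h2 : ((i:ℝ)+2) ≠ 0 := by positivity
          field_simp
          ring
        have htel : ∑ i ∈ Finset.range m, (σ2/((i:ℝ)+1) - σ2/((i:ℝ)+2)) ≤ σ2 := by
          have h := Finset.sum_range_sub' (f := fun i : ℕ => σ2/((i:ℝ)+1)) m
          have heqs : ∑ i ∈ Finset.range m, (σ2/((i:ℝ)+1) - σ2/((i:ℝ)+2))
              = σ2/(((0:ℕ):ℝ)+1) - σ2/((m:ℝ)+1) := by
            rw [← h]
            apply Finset.sum_congr rfl
            intro i _
            push_cast
            ring
          rw [heqs]
          have hnn : 0 ≤ σ2/((m:ℝ)+1) := by positivity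
          norm_num
          linarith
        have hsum_eq : ∑ i ∈ Finset.range m,
            ∫ x, (runMean Z c0 (i+1) x - θstar)^2 / (((i+1:ℕ):ℝ)+1) ∂μ
            = ∑ i ∈ Finset.range m, (σ2/((i:ℝ)+1) - σ2/((i:ℝ)+2)) :=
          Finset.sum_congr rfl fun i _ => hterm i
        rw [hterm0, hsum_eq, hB0]
        linarith
  have htailB : Tendsto (fun n : ℕ => ENNReal.ofReal (B0 / τB n)) atTop (𝓝 0) := by
    have h1 : Tendsto (fun n : ℕ => τB n) atTop atTop := by
      have hc : 0 < C^2/32 := by positivity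
      exact hlogtend.const_mul_atTop hc
    have h2 : Tendsto (fun n : ℕ => B0 / τB n) atTop (𝓝 0) :=
      Tendsto.div_atTop tendsto_const_nhds h1
    have h3 := ENNReal.tendsto_ofReal h2
    simpa using h3
  have hBtend : Tendsto (fun n => μ (SB n)ᶜ) atTop (𝓝 0) := by
    have hbound : ∀ᶠ n in atTop, μ (SB n)ᶜ ≤ ENNReal.ofReal (B0 / τB n) := by
      filter_upwards [eventually_ge_atTop 2] with n hn
      have hn1 : (1:ℝ) < n := by exact_mod_cast (by omega : 1 < n)
      have hlogpos : 0 < Real.log n := Real.log_pos hn1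
      have hτpos : 0 < τB n := by
        rw [hτB]
        have : (0:ℝ) < C^2/32 := by positivity
        exact mul_pos this hlogpos
      have hfint : Integrable
          (fun x => ∑ i ∈ Finset.range n, (runMean Z c0 i x - θstar)^2/((i:ℝ)+1)) μ :=
        integrable_finset_sum _ (fun i _ => hBint i)
      have hmark := mul_meas_ge_le_integral_of_nonneg (μ := μ)
        (f := fun x => ∑ i ∈ Finset.range n, (runMean Z c0 i x - θstar)^2/((i:ℝ)+1))
        (Eventually.of_forall (fun x => Finset.sum_nonneg fun i _ => by positivity))
        hfint (τB n)
      have h1 : (μ {x | τB n ≤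
          ∑ i ∈ Finset.range n, (runMean Z c0 i x - θstar)^2/((i:ℝ)+1)}).toReal
          ≤ B0 / τB n := by
        rw [le_div_iff₀ hτpos]
        rw [measureReal_def] at hmark; nlinarith [hmark, hEB n]
      have h2 : μ (SB n)ᶜ ≤ μ {x | τB n ≤
          ∑ i ∈ Finset.range n, (runMean Z c0 i x - θstar)^2/((i:ℝ)+1)} := by
        apply measure_mono
        intro x hx
        simp only [Set.mem_compl_iff, Set.mem_setOf_eq, not_le, hSB] at hx ⊢
        exact hx.le
      calc μ (SB n)ᶜ ≤ _ := h2
        _ ≤ ENNReal.ofReal (B0 / τB n) := by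
            rw [← ENNReal.ofReal_toReal (measure_ne_top μ _)]
            exact ENNReal.ofReal_le_ofReal h1
    exact tendsto_of_tendsto_of_tendsto_of_le_of_le' tendsto_const_nhds htailB
      (Eventually.of_forall (fun n => zero_le)) hbound
  -- Part C
  have hCtend : Tendsto (fun n => μ (SC n)) atTop (𝓝 1) := by
    apply GUe_tendsto_prob_of_ae_eventually μ SC hSCmeas
    have hWint : Integrable (fun x => (X 0 x)^2) μ := hXsq_int 0
    have hWindep : Pairwise (Function.onFun (IndepFun · · μ) (fun i x => (X i x)^2)) := by
      intro i j hij
      exact (hindep.indepFun hij).comp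
        ((measurable_id.sub measurable_const).pow_const 2)
        ((measurable_id.sub measurable_const).pow_const 2)
    have hZident : ∀ i, IdentDistrib (Z i) (Z 0) μ μ := fun i =>
      ⟨(hZmeas i).aemeasurable, (hZmeas 0).aemeasurable, by rw [hiid i, hiid 0]⟩
    have hWident : ∀ i : ℕ, IdentDistrib (fun x => (X i x)^2) (fun x => (X 0 x)^2) μ μ :=
      fun i => (hZident i).comp ((measurable_id.sub measurable_const).pow_const 2)
    have hslln := strong_law_ae_real (fun i x => (X i x)^2) hWint hWindep hWident
    have hmean0 : (μ[fun x => (X 0 x)^2]) = σ2 := hXsq_mean 0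
    rw [hmean0] at hslln
    have hKnn : (0:ℝ) ≤ K := by rw [hKdef]; linarith
    filter_upwards [hslln] with x hx
    have hx' : Tendsto (fun n : ℕ => (∑ i ∈ Finset.range n, (X i x)^2)/n) atTop (𝓝 σ2) := hx
    have hev : ∀ᶠ n : ℕ in atTop, ∑ i ∈ Finset.range n, (X i x)^2 ≤ K * n := by
      have h1 : ∀ᶠ n : ℕ in atTop, (∑ i ∈ Finset.range n, (X i x)^2)/n < K :=
        hx'.eventually_lt_const (by rw [hKdef]; linarith)
      filter_upwards [h1, eventually_ge_atTop 1] with n h hn1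
      have hnpos : (0:ℝ) < n := by exact_mod_cast Nat.pos_of_ne_zero (by omega)
      have := (div_le_iff₀ hnpos).1 h.le
      linarith
    obtain ⟨N0, hN0⟩ := eventually_atTop.1 hev
    set N := max N0 1 with hNdef
    have habel := GUe_abel_bound (fun i => (X i x)^2) (fun i => sq_nonneg _) K hKnn
      N (le_max_right _ _) (fun i hi => hN0 i (le_trans (le_max_left _ _) hi))
    have hlogev : ∀ᶠ n : ℕ in atTop,
        (∑ i ∈ Finset.range N, (X i x)^2/((i:ℝ)+1)) + 2*K ≤ Real.log n :=
      hlogtend.eventually_ge_atTop _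
    filter_upwards [hlogev, eventually_ge_atTop N] with n h1 h2
    show x ∈ SC n
    simp only [hSC, Set.mem_setOf_eq]
    have h3 := habel n h2
    have hτ : τB n = (K+1) * Real.log n := by
      rw [hτB, hC2, hKdef]; ring
    rw [hτ]
    have hUNnn : 0 ≤ ∑ i ∈ Finset.range N, (X i x)^2/((i:ℝ)+1) :=
      Finset.sum_nonneg (fun i _ => div_nonneg (sq_nonneg (X i x))
        (by positivity : (0:ℝ) ≤ (i:ℝ)+1))
    have hlognn : 0 ≤ Real.log n := by linarith
    have e1 : K*(2+Real.log n) = 2*K + K*Real.log n := by ring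
    have e2 : (K+1)*Real.log n = K*Real.log n + Real.log n := by ring
    linarith
  -- assembly
  set G : ℕ → Set Ω := fun n => SA n ∩ SB n ∩ SC n with hG
  have hGmeas : ∀ n, MeasurableSet (G n) :=
    fun n => ((hSAmeas n).inter (hSBmeas n)).inter (hSCmeas n)
  have hSCcompl : Tendsto (fun n => μ (SC n)ᶜ) atTop (𝓝 0) := by
    have h1 : ∀ n, μ (SC n)ᶜ = 1 - μ (SC n) := fun n => prob_compl_eq_one_sub (hSCmeas n)
    simp_rw [h1]
    have h2 := ENNReal.Tendsto.sub (tendsto_const_nhds (x := (1:ENNReal))) hCtend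
      (Or.inl ENNReal.one_ne_top)
    simpa using h2
  have hGcompl : Tendsto (fun n => μ (G n)ᶜ) atTop (𝓝 0) := by
    have hb : ∀ n, μ (G n)ᶜ ≤ μ (SA n)ᶜ + μ (SB n)ᶜ + μ (SC n)ᶜ := by
      intro n
      have he : (G n)ᶜ = ((SA n)ᶜ ∪ (SB n)ᶜ) ∪ (SC n)ᶜ := by
        rw [hG]
        simp [Set.compl_inter]
      rw [he]
      exact le_trans (measure_union_le _ _) (add_le_add (measure_union_le _ _) le_rfl)
    have hsum : Tendsto (fun n => μ (SA n)ᶜ + μ (SB n)ᶜ + μ (SC n)ᶜ) atTop (𝓝 0) := by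
      have := (hAtend.add hBtend).add hSCcompl
      simpa using this
    exact tendsto_of_tendsto_of_tendsto_of_le_of_le tendsto_const_nhds hsum
      (fun n => zero_le) hb
  have hGtend : Tendsto (fun n => μ (G n)) atTop (𝓝 1) := by
    have h1 : ∀ n, μ (G n) = 1 - μ (G n)ᶜ := by
      intro n
      rw [← prob_compl_eq_one_sub (hGmeas n).compl, compl_compl]
    simp_rw [h1]
    have h2 := ENNReal.Tendsto.sub (tendsto_const_nhds (x := (1:ENNReal))) hGcompl
      (Or.inl ENNReal.one_ne_top)
    simpa using h2
  have hincl : ∀ᶠ n : ℕ in atTop, G n ⊆ {x | α⁻¹ ≤ Real.exp (-ω * ∑ i ∈ Finset.range n,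
      ((Z i x - runMean Z c0 i x) ^ 2 - (Z i x - θseq n) ^ 2))} := by
    have hαlog : ∀ᶠ n : ℕ in atTop, Real.log α⁻¹ ≤ ω * (C^2/4 * Real.log n) := by
      have h1 : Tendsto (fun n : ℕ => ω * (C^2/4 * Real.log n)) atTop atTop := by
        apply Tendsto.const_mul_atTop hω
        exact hlogtend.const_mul_atTop (by positivity)
      exact h1.eventually_ge_atTop _
    filter_upwards [hθ, hαlog, eventually_ge_atTop 2] with n hθn hαn hn2
    intro x hxG
    have hxA : (n:ℝ) * (runMean Z c0 n x - θstar)^2 ≤ C^2/8 * Real.log n := hxG.1.1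
    have hxB : (∑ i ∈ Finset.range n, (runMean Z c0 i x - θstar)^2/((i:ℝ)+1))
        ≤ C^2/32 * Real.log n := hxG.1.2
    have hxC : (∑ i ∈ Finset.range n, (X i x)^2/((i:ℝ)+1)) ≤ C^2/32 * Real.log n := hxG.2
    have hn1 : (1:ℝ) < n := by exact_mod_cast (by omega : 1 < n)
    have hnpos : (0:ℝ) < n := lt_trans one_pos hn1
    have hlognn : 0 ≤ Real.log n := Real.log_nonneg hn1.le
    -- bound R
    have hR : (∑ i ∈ Finset.range n, (Z i x - runMean Z c0 i x)^2/((i:ℝ)+1))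
        ≤ C^2/8 * Real.log n := by
      have hpt : ∀ i ∈ Finset.range n,
          (Z i x - runMean Z c0 i x)^2/((i:ℝ)+1)
            ≤ 2*((X i x)^2/((i:ℝ)+1)) + 2*((runMean Z c0 i x - θstar)^2/((i:ℝ)+1)) := by
        intro i _
        have hipos : (0:ℝ) < (i:ℝ)+1 := by positivity
        have hnum : (Z i x - runMean Z c0 i x)^2
            ≤ 2*(X i x)^2 + 2*(runMean Z c0 i x - θstar)^2 := by
          have hxid : X i x = Z i x - θstar := rfl
          have heqz : Z i x - runMean Z c0 i x = X i x - (runMean Z c0 i x - θstar) := by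
            rw [hxid]; ring
          rw [heqz]
          nlinarith [sq_nonneg (X i x + (runMean Z c0 i x - θstar))]
        calc (Z i x - runMean Z c0 i x)^2/((i:ℝ)+1)
            ≤ (2*(X i x)^2 + 2*(runMean Z c0 i x - θstar)^2)/((i:ℝ)+1) := by
              gcongr
          _ = 2*((X i x)^2/((i:ℝ)+1)) + 2*((runMean Z c0 i x - θstar)^2/((i:ℝ)+1)) := by
              field_simp
      have hsum := Finset.sum_le_sum hpt
      have hsplit : ∑ i ∈ Finset.range n,
          (2*((X i x)^2/((i:ℝ)+1)) + 2*((runMean Z c0 i x - θstar)^2/((i:ℝ)+1)))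
          = 2*(∑ i ∈ Finset.range n, (X i x)^2/((i:ℝ)+1))
            + 2*(∑ i ∈ Finset.range n, (runMean Z c0 i x - θstar)^2/((i:ℝ)+1)) := by
        rw [Finset.sum_add_distrib, ← Finset.mul_sum, ← Finset.mul_sum]
      rw [hsplit] at hsum
      linarith
    -- lower bound on n * (m_n - θn)^2
    have hΔnn : 0 ≤ θseq n - θstar :=
      le_trans (by positivity) hθn
    have hΔ2 : C^2 * (Real.log n / n) ≤ (θseq n - θstar)^2 := by
      have hq : 0 ≤ Real.log n / (n:ℝ) := by positivity
      have h1 : (C * Real.sqrt (Real.log n / n))^2 ≤ (θseq n - θstar)^2 := by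
        apply sq_le_sq' _ hθn
        have : 0 ≤ C * Real.sqrt (Real.log n / n) := by positivity
        linarith
      rw [mul_pow, Real.sq_sqrt hq] at h1
      exact h1
    have hnΔ2 : C^2 * Real.log n ≤ (n:ℝ) * (θseq n - θstar)^2 := by
      have h2 := mul_le_mul_of_nonneg_left hΔ2 hnpos.le
      have he : (n:ℝ) * (C^2 * (Real.log n / n)) = C^2 * Real.log n := by
        field_simp
      linarith [he ▸ h2]
    have hhalf : (θseq n - θstar)^2/2 - (runMean Z c0 n x - θstar)^2
        ≤ (runMean Z c0 n x - θseq n)^2 := by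
      nlinarith [sq_nonneg (2*(runMean Z c0 n x - θstar) - (θseq n - θstar))]
    have hprod := mul_le_mul_of_nonneg_left hhalf hnpos.le
    have he2 : (n:ℝ) * ((θseq n - θstar)^2/2 - (runMean Z c0 n x - θstar)^2)
        = ((n:ℝ) * (θseq n - θstar)^2)/2 - (n:ℝ)*(runMean Z c0 n x - θstar)^2 := by ring
    rw [he2] at hprod
    have hbig : C^2/4 * Real.log n
        ≤ (n:ℝ) * (runMean Z c0 n x - θseq n)^2
          - ∑ i ∈ Finset.range n, (Z i x - runMean Z c0 i x)^2/((i:ℝ)+1) := by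
      linarith
    -- conclude via the key identity
    have hkey := GUe_key_identity Z c0 (θseq n) x n
    have hSneg : ∑ i ∈ Finset.range n,
        ((Z i x - runMean Z c0 i x)^2 - (Z i x - θseq n)^2)
        = -((n:ℝ) * (runMean Z c0 n x - θseq n)^2
          - ∑ i ∈ Finset.range n, (Z i x - runMean Z c0 i x)^2/((i:ℝ)+1)) := by
      rw [← hkey, ← Finset.sum_neg_distrib]
      exact Finset.sum_congr rfl fun i _ => (neg_sub _ _).symm
    show α⁻¹ ≤ Real.exp (-ω * ∑ i ∈ Finset.range n,
      ((Z i x - runMean Z c0 i x) ^ 2 - (Z i x - θseq n) ^ 2))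
    rw [hSneg]
    have he3 : -ω * -((n:ℝ) * (runMean Z c0 n x - θseq n)^2
        - ∑ i ∈ Finset.range n, (Z i x - runMean Z c0 i x)^2/((i:ℝ)+1))
        = ω * ((n:ℝ) * (runMean Z c0 n x - θseq n)^2
          - ∑ i ∈ Finset.range n, (Z i x - runMean Z c0 i x)^2/((i:ℝ)+1)) := by ring
    rw [he3, ← Real.exp_log (show (0:ℝ) < α⁻¹ from inv_pos.2 hα0)]
    apply Real.exp_le_exp.2
    have h4 := mul_le_mul_of_nonneg_left hbig hω.le
    linarith
  exact tendsto_of_tendsto_of_tendsto_of_le_of_le' hGtend tendsto_const_nhds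
    (by filter_upwards [hincl] with n h using measure_mono h)
    (Eventually.of_forall fun n => prob_le_one)

end
end
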